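/- arXiv:2311.02685 — 11 statements merged into one kernel-verified Lean document; each statement's English description precedes it below -/
import Mathlib

section
/- If x is a P-position of Moore's NIM game NIM(n,k), then k+1 divides the total number of stones S(x) = Σ_{i=1}^n x_i, and the Smith remoteness value satisfies R(x) = 2·S(x)/(k+1). -/
/-- Smith's remoteness function for an impartial game with move relation `mv`. -/
def IsRemoteness {α : Type*} (mv : α → α → Prop) (R : α → ℕ) : Prop :=
  ∀ x : α,
    ((∀ y, ¬ mv x y) → R x = 0) ∧
    ((∃ y, mv x y ∧ Even (R y)) →
      ∃ y, mv x y ∧ Even (R y) ∧ R x = R y + 1 ∧ ∀ z, mv x z → Even (R z) → R y ≤ R z) ∧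
    ((∃ y, mv x y) → (∀ y, mv x y → ¬ Even (R y)) →
      ∃ y, mv x y ∧ R x = R y + 1 ∧ ∀ z, mv x z → R z ≤ R y)

/-- A move of Moore's NIM game NIM(n,k): strictly decrease the piles in some
nonempty set of at most `k` indices, leaving all other piles unchanged. -/
def MooreMove {ι : Type*} [Fintype ι] (k : ℕ) (x y : ι → ℕ) : Prop :=
  (∀ i, y i ≤ x i) ∧ y ≠ x ∧ (Finset.univ.filter fun i => y i < x i).card ≤ k

/-!
Call `x` balanced when `k + 1` divides every binary digit sum `d_j(x)`, the number of piles whose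
`j`-th digit is `1`. A move changes at most `k` piles, hence each `d_j` by at most `k`, so it
never joins two balanced positions: they would have the same digit sums and so the same total.
From an unbalanced position some move reaches a balanced one, fixing the digit sums from the top
down and using the lowered piles, whose lower digits are then free.

By induction on `S(x)`, a position has even remoteness iff it is balanced, and then
`R(x) = 2 S(x) / (k + 1)`. Every move from a balanced `x` leads to an unbalanced `y` whose
remoteness is one more than that of a balanced position with at least `k + 1` fewer stones than
`x`; if the move takes one stone from a pile carrying the lowest nonzero digit of `x`, every
balanced position reachable from `y` has at most `k + 1` fewer stones than `x`.
-/

namespace MooreNim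

open Finset

variable {ι : Type*} {k : ℕ}

theorem sum_range_two_pow_mul_testBit (m B : ℕ) :
    ∑ j ∈ range B, 2 ^ j * (m.testBit j).toNat = m % 2 ^ B := by
  induction B with
  | zero => simp [Nat.mod_one]
  | succ B ih => rw [sum_range_succ, ih, Nat.mod_pow_succ, Nat.toNat_testBit]

theorem testBit_eq_of_div_eq {a b s j : ℕ} (h : a / 2 ^ s = b / 2 ^ s) (hj : s ≤ j) :
    a.testBit j = b.testBit j := by
  rw [← Nat.sub_add_cancel hj, ← Nat.testBit_div_two_pow, h, Nat.testBit_div_two_pow]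

theorem div_two_pow_eq (j m : ℕ) : m / 2 ^ j = m / 2 ^ (j + 1) * 2 + (m.testBit j).toNat := by
  rw [Nat.toNat_testBit, pow_succ, ← Nat.div_div_eq_div_mul]
  omega

def setDigitClearLow (j b m : ℕ) : ℕ := (m / 2 ^ (j + 1) * 2 + b) * 2 ^ j

theorem setDigitClearLow_div_two_pow (j b m : ℕ) :
    setDigitClearLow j b m / 2 ^ j = m / 2 ^ (j + 1) * 2 + b :=
  Nat.mul_div_cancel _ (by positivity)

theorem setDigitClearLow_div_two_pow_succ {b : ℕ} (hb : b ≤ 1) (j m : ℕ) :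
    setDigitClearLow j b m / 2 ^ (j + 1) = m / 2 ^ (j + 1) := by
  rw [pow_succ, ← Nat.div_div_eq_div_mul, setDigitClearLow_div_two_pow, ← pow_succ]
  omega

theorem toNat_testBit_setDigitClearLow {b : ℕ} (hb : b ≤ 1) (j m : ℕ) :
    ((setDigitClearLow j b m).testBit j).toNat = b := by
  rw [Nat.toNat_testBit, setDigitClearLow_div_two_pow]
  omega

theorem testBit_eq_false_of_two_pow_dvd {m t j : ℕ} (h : 2 ^ t ∣ m) (hj : j < t) :
    m.testBit j = false := by
  obtain ⟨w, rfl⟩ := h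
  rw [mul_comm, Nat.testBit_mul_two_pow]
  simp [hj.not_ge]

theorem testBit_sub_one_of_lt {m t v j : ℕ} (hm : m = 2 ^ (t + 1) * v + 2 ^ t) (hj : j < t) :
    (m - 1).testBit j = true := by
  have hpow : 2 ^ t < 2 ^ (t + 1) := Nat.pow_lt_pow_right (by norm_num) (by omega)
  have hpos := Nat.one_le_two_pow (n := t)
  rw [show m - 1 = 2 ^ (t + 1) * v + (2 ^ t - 1) by omega,
    Nat.testBit_two_pow_mul_add v (by omega), if_pos (by omega), Nat.testBit_two_pow_sub_one]
  simpa using hj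

theorem testBit_sub_one_of_gt {m t v j : ℕ} (hm : m = 2 ^ (t + 1) * v + 2 ^ t) (hj : t < j) :
    (m - 1).testBit j = m.testBit j := by
  have hpow : 2 ^ t < 2 ^ (t + 1) := Nat.pow_lt_pow_right (by norm_num) (by omega)
  have hpos := Nat.one_le_two_pow (n := t)
  rw [show m - 1 = 2 ^ (t + 1) * v + (2 ^ t - 1) by omega, hm,
    Nat.testBit_two_pow_mul_add v (by omega), Nat.testBit_two_pow_mul_add v hpow,
    if_neg (by omega), if_neg (by omega)]

theorem exists_add_dvd (k s : ℕ) : ∃ e ≤ k, k + 1 ∣ e + s := by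
  refine ⟨k - (s + k) % (k + 1), Nat.sub_le _ _, ?_⟩
  have hlt : (s + k) % (k + 1) < k + 1 := Nat.mod_lt _ (by omega)
  have hdvd := Nat.dvd_sub_mod (n := k + 1) (s + k)
  convert hdvd using 1
  omega

theorem sum_range_two_pow_mul_le {c : ℕ → ℤ} {m : ℤ} {t B : ℕ} (ht : t < B)
    (hlow : ∀ j < t, c j ≤ -m) (htop : c t ≤ m) (hhigh : ∀ j, t < j → c j = 0) :
    ∑ j ∈ range B, 2 ^ j * c j ≤ m := by
  have hgeom : ∑ j ∈ range t, (2 : ℤ) ^ j = 2 ^ t - 1 := by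
    simpa using geom_sum_mul (2 : ℤ) t
  calc ∑ j ∈ range B, 2 ^ j * c j = ∑ j ∈ range (t + 1), 2 ^ j * c j := by
        refine (sum_subset (range_subset_range.2 ht) fun j _ hj => ?_).symm
        rw [hhigh j (by simpa using hj), mul_zero]
    _ = ∑ j ∈ range t, 2 ^ j * c j + 2 ^ t * c t := sum_range_succ _ _
    _ ≤ ∑ j ∈ range t, 2 ^ j * (-m) + 2 ^ t * m := by
        gcongr with j hj
        exact hlow j (mem_range.1 hj)
    _ = m := by rw [← sum_mul, hgeom]; ring

section Rewrite

variable [DecidableEq ι]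

def rewriteDigit (j : ℕ) (A T : Finset ι) (x : ι → ℕ) (i : ι) : ℕ :=
  if i ∈ A then setDigitClearLow j (if i ∈ T then 1 else 0) (x i) else x i

variable {j : ℕ} {A T : Finset ι} {x : ι → ℕ}

theorem rewriteDigit_div_two_pow_succ (i : ι) :
    rewriteDigit j A T x i / 2 ^ (j + 1) = x i / 2 ^ (j + 1) := by
  unfold rewriteDigit
  split_ifs <;> simp [setDigitClearLow_div_two_pow_succ]

theorem rewriteDigit_of_notMem {i : ι} (hi : i ∉ A) : rewriteDigit j A T x i = x i :=
  if_neg hi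

theorem rewriteDigit_div_two_pow_lt {i : ι} (hiA : i ∈ A) (hiT : i ∉ T)
    (h : (x i).testBit j = true) : rewriteDigit j A T x i / 2 ^ j < x i / 2 ^ j := by
  rw [rewriteDigit, if_pos hiA, if_neg hiT, setDigitClearLow_div_two_pow, div_two_pow_eq j (x i),
    h]
  simp

end Rewrite

variable [Fintype ι]

def digitSum (j : ℕ) (x : ι → ℕ) : ℕ := ∑ i, ((x i).testBit j).toNat

/-- Moore's condition; by Moore's theorem these are the P-positions of NIM(n,k). -/
def Balanced (k : ℕ) (x : ι → ℕ) : Prop := ∀ j, k + 1 ∣ digitSum j x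

theorem sum_eq_sum_range_digitSum {x : ι → ℕ} {B : ℕ} (hB : ∀ i, x i < 2 ^ B) :
    ∑ i, x i = ∑ j ∈ range B, 2 ^ j * digitSum j x := by
  simp_rw [digitSum, mul_sum]
  rw [sum_comm]
  exact sum_congr rfl fun i _ => by rw [sum_range_two_pow_mul_testBit, Nat.mod_eq_of_lt (hB i)]

theorem lt_two_pow_sum (x : ι → ℕ) (i : ι) : x i < 2 ^ ∑ i, x i :=
  (single_le_sum (fun i _ => Nat.zero_le (x i)) (mem_univ i)).trans_lt Nat.lt_two_pow_self

theorem sum_sub_sum_eq_sum_digitSum_sub {x z : ι → ℕ} {B : ℕ} (hB : ∀ i, x i < 2 ^ B)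
    (hzx : ∀ i, z i ≤ x i) :
    ∑ i, (x i : ℤ) - ∑ i, (z i : ℤ) =
      ∑ j ∈ range B, 2 ^ j * ((digitSum j x : ℤ) - digitSum j z) := by
  rw [← Nat.cast_sum, ← Nat.cast_sum, sum_eq_sum_range_digitSum hB,
    sum_eq_sum_range_digitSum fun i => (hzx i).trans_lt (hB i)]
  push_cast
  simp_rw [mul_sub, sum_sub_distrib]

theorem abs_digitSum_sub_le (x z : ι → ℕ) (j : ℕ) :
    |(digitSum j x : ℤ) - digitSum j z| ≤ #{i | (x i).testBit j ≠ (z i).testBit j} := by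
  calc |(digitSum j x : ℤ) - digitSum j z|
      = |∑ i, ((((x i).testBit j).toNat : ℤ) - ((z i).testBit j).toNat)| := by
        simp [digitSum, sum_sub_distrib]
    _ ≤ ∑ i, |((((x i).testBit j).toNat : ℤ) - ((z i).testBit j).toNat)| :=
        abs_sum_le_sum_abs _ _
    _ = ∑ i, if (x i).testBit j ≠ (z i).testBit j then 1 else 0 :=
        sum_congr rfl fun i _ => by cases (x i).testBit j <;> cases (z i).testBit j <;> simp
    _ = #{i | (x i).testBit j ≠ (z i).testBit j} := by rw [sum_boole]

theorem digitSum_eq_of_div_eq {x y : ι → ℕ} {s j : ℕ} (h : ∀ i, x i / 2 ^ s = y i / 2 ^ s)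
    (hj : s ≤ j) : digitSum j x = digitSum j y :=
  sum_congr rfl fun i _ => by rw [testBit_eq_of_div_eq (h i) hj]

theorem digitSum_rewriteDigit [DecidableEq ι] {j : ℕ} {A T : Finset ι} {x : ι → ℕ}
    (hTA : T ⊆ A) :
    digitSum j (rewriteDigit j A T x) = #T + ∑ i ∈ Aᶜ, ((x i).testBit j).toNat := by
  rw [digitSum, ← sum_add_sum_compl A]
  congr 1
  · rw [card_eq_sum_ones, ← inter_eq_right.2 hTA, ← sum_ite_mem]
    refine sum_congr rfl fun i hi => ?_
    rw [rewriteDigit, if_pos hi, toNat_testBit_setDigitClearLow (by split_ifs <;> simp)]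
    simp [hi]
  · exact sum_congr rfl fun i hi => by rw [rewriteDigit_of_notMem (mem_compl.1 hi)]

namespace Balanced

variable {x z : ι → ℕ}

theorem dvd_sum (hx : Balanced k x) : k + 1 ∣ ∑ i, x i := by
  rw [sum_eq_sum_range_digitSum (lt_two_pow_sum x)]
  exact Finset.dvd_sum fun j _ => (hx j).mul_left _

theorem le_digitSum (hz : Balanced k z) {i : ι} {j : ℕ} (h : (z i).testBit j = true) :
    k + 1 ≤ digitSum j z := by
  refine Nat.le_of_dvd ?_ (hz j)
  calc 0 < ((z i).testBit j).toNat := by simp [h]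
    _ ≤ digitSum j z :=
        single_le_sum (f := fun i => ((z i).testBit j).toNat) (by simp) (mem_univ i)

theorem digitSum_eq (hx : Balanced k x) (hz : Balanced k z) {j : ℕ}
    (h : #{i | (x i).testBit j ≠ (z i).testBit j} ≤ k) : digitSum j x = digitSum j z := by
  have hdvd : ((k + 1 : ℕ) : ℤ) ∣ (digitSum j x : ℤ) - digitSum j z :=
    dvd_sub (Int.natCast_dvd_natCast.2 (hx j)) (Int.natCast_dvd_natCast.2 (hz j))
  have hbound := abs_digitSum_sub_le x z j
  have := Int.eq_zero_of_abs_lt_dvd hdvd (by push_cast; omega)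
  omega

end Balanced

theorem MooreMove.sum_lt {x y : ι → ℕ} (h : MooreMove k x y) : ∑ i, y i < ∑ i, x i := by
  obtain ⟨hle, hne, -⟩ := h
  refine sum_lt_sum (fun i _ => hle i) ?_
  by_contra! hge
  exact hne (funext fun i => le_antisymm (hle i) (hge i (mem_univ i)))

theorem Balanced.not_mooreMove {x z : ι → ℕ} (hx : Balanced k x) (hz : Balanced k z) :
    ¬ MooreMove k x z := by
  intro hmove
  have hlt := MooreMove.sum_lt hmove
  obtain ⟨hzx, -, hcard⟩ := hmove
  have hdigits : ∀ j, digitSum j x = digitSum j z := fun j =>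
    hx.digitSum_eq hz <| (card_le_card fun i hi => by
      simp only [mem_filter, mem_univ, true_and] at hi ⊢
      exact (hzx i).lt_of_ne fun h => hi (h ▸ rfl)).trans hcard
  have hsum := sum_sub_sum_eq_sum_digitSum_sub (lt_two_pow_sum x) hzx
  simp only [hdigits, sub_self, mul_zero, sum_const_zero, sub_eq_zero] at hsum
  exact hlt.ne (by exact_mod_cast hsum.symm)

/-- The piles of `A` were already lowered at a higher digit, so everything below digit `j + 1`
is free in them; lowering at most `k - #A` more piles at digit `j` makes the `j`-th digit sum
divisible by `k + 1`. -/
theorem exists_dvd_digitSum_step [DecidableEq ι] (j : ℕ) (x : ι → ℕ) {A : Finset ι}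
    (hA : #A ≤ k) :
    ∃ (x' : ι → ℕ) (A' : Finset ι), A ⊆ A' ∧ #A' ≤ k ∧ k + 1 ∣ digitSum j x' ∧
      (∀ i, x' i / 2 ^ (j + 1) = x i / 2 ^ (j + 1)) ∧ (∀ i ∉ A', x' i = x i) ∧
      ∀ i ∈ A', i ∉ A → x' i / 2 ^ j < x i / 2 ^ j := by
  set s := ∑ i ∈ Aᶜ, ((x i).testBit j).toNat with hs
  obtain ⟨e, hek, hes⟩ := exists_add_dvd k s
  by_cases heA : e ≤ #A
  · obtain ⟨T, hTA, hT⟩ := exists_subset_card_eq heA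
    refine ⟨rewriteDigit j A T x, A, subset_rfl, hA, ?_, rewriteDigit_div_two_pow_succ,
      fun i hi => rewriteDigit_of_notMem hi, fun i hi hi' => absurd hi hi'⟩
    rwa [digitSum_rewriteDigit hTA, hT]
  · -- lower `k + 1 - e` piles outside `A` whose `j`-th digit is `1`
    have hks : k + 1 ≤ e + s := Nat.le_of_dvd (by omega) hes
    set W := {i ∈ Aᶜ | (x i).testBit j} with hW
    have hWs : #W = s := by
      rw [hW, card_filter]
      exact sum_congr rfl fun i _ => by cases (x i).testBit j <;> rfl
    obtain ⟨U, hUW, hU⟩ := exists_subset_card_eq (show k + 1 - e ≤ #W by omega)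
    have hUA : U ⊆ Aᶜ := hUW.trans (filter_subset _ _)
    have hU1 : ∀ i ∈ U, (x i).testBit j = true := fun i hi => (mem_filter.1 (hUW hi)).2
    have hdisj : Disjoint A U := disjoint_left.2 fun i hiA hiU => mem_compl.1 (hUA hiU) hiA
    have hsplit : ∑ i ∈ (A ∪ U)ᶜ, ((x i).testBit j).toNat + #U = s := by
      rw [compl_union, ← sdiff_eq_inter_compl, card_eq_sum_ones, hs, ← sum_sdiff hUA]
      congr 1
      exact sum_congr rfl fun i hi => by rw [hU1 i hi]; rfl
    refine ⟨rewriteDigit j (A ∪ U) ∅ x, A ∪ U, subset_union_left, ?_, ?_,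
      rewriteDigit_div_two_pow_succ, fun i hi => rewriteDigit_of_notMem hi, fun i hi hiA => ?_⟩
    · rw [card_union_of_disjoint hdisj]
      omega
    · rw [digitSum_rewriteDigit (empty_subset _), card_empty, zero_add]
      have := Nat.dvd_sub hes (dvd_refl (k + 1))
      convert this using 1
      omega
    · have hiU : i ∈ U := (mem_union.1 hi).resolve_left hiA
      exact rewriteDigit_div_two_pow_lt hi (notMem_empty i) (hU1 i hiU)

theorem exists_balanced_of_dvd_digitSum [DecidableEq ι] (j : ℕ) :
    ∀ (x : ι → ℕ) (A : Finset ι), #A ≤ k →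
      (∀ j', j ≤ j' → k + 1 ∣ digitSum j' x) →
      ∃ (y : ι → ℕ) (A' : Finset ι), A ⊆ A' ∧ #A' ≤ k ∧ Balanced k y ∧
        (∀ i, y i / 2 ^ j = x i / 2 ^ j) ∧ (∀ i ∉ A', y i = x i) ∧
        ∀ i ∈ A', i ∉ A → y i < x i := by
  induction j with
  | zero =>
    intro x A hA hdvd
    exact ⟨x, A, subset_rfl, hA, fun j => hdvd j (Nat.zero_le j), fun _ => rfl,
      fun _ _ => rfl, fun i hi hi' => absurd hi hi'⟩
  | succ j ih =>
    intro x A hA hdvd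
    obtain ⟨x', A₁, hAA₁, hA₁, hj, hpre, hoff, hlow⟩ := exists_dvd_digitSum_step j x hA
    have hdvd' : ∀ j', j ≤ j' → k + 1 ∣ digitSum j' x' := by
      intro j' hj'
      rcases hj'.eq_or_lt with rfl | hlt
      · exact hj
      · rw [digitSum_eq_of_div_eq hpre hlt]
        exact hdvd j' hlt
    obtain ⟨y, A₂, hA₁A₂, hA₂, hy, hpre', hoff', hlow'⟩ := ih x' A₁ hA₁ hdvd'
    refine ⟨y, A₂, hAA₁.trans hA₁A₂, hA₂, hy, fun i => ?_, fun i hi => ?_,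
      fun i hi hiA => ?_⟩
    · rw [pow_succ, ← Nat.div_div_eq_div_mul, ← Nat.div_div_eq_div_mul, hpre' i,
        Nat.div_div_eq_div_mul, Nat.div_div_eq_div_mul, ← pow_succ, hpre i]
    · rw [hoff' i hi, hoff i fun h => hi (hA₁A₂ h)]
    · by_cases hi₁ : i ∈ A₁
      · exact Nat.lt_of_div_lt_div (c := 2 ^ j) (hpre' i ▸ hlow i hi₁ hiA)
      · exact hoff i hi₁ ▸ hlow' i hi hi₁

theorem exists_mooreMove_balanced {x : ι → ℕ} (hx : ¬ Balanced k x) :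
    ∃ y, MooreMove k x y ∧ Balanced k y := by
  classical
  have hhigh : ∀ j, ∑ i, x i ≤ j → k + 1 ∣ digitSum j x := fun j hj => by
    simp [digitSum, Nat.testBit_eq_false_of_lt
      ((lt_two_pow_sum x _).trans_le (Nat.pow_le_pow_right two_pos hj))]
  obtain ⟨y, A, -, hA, hy, -, hoff, hlow⟩ :=
    exists_balanced_of_dvd_digitSum (∑ i, x i) x ∅ (by simp) hhigh
  have hle : ∀ i, y i ≤ x i := fun i =>
    if hi : i ∈ A then (hlow i hi (notMem_empty i)).le else (hoff i hi).le
  refine ⟨y, ⟨hle, fun h => hx (h ▸ hy), (card_le_card fun i hi => ?_).trans hA⟩, hy⟩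
  by_contra hiA
  simp [hoff i hiA] at hi

theorem exists_lowest_digit {x : ι → ℕ} (hx : x ≠ 0) :
    ∃ (i₀ : ι) (t v : ℕ), x i₀ = 2 ^ (t + 1) * v + 2 ^ t ∧ ∀ i, 2 ^ t ∣ x i := by
  classical
  have hne : ({i | x i ≠ 0} : Finset ι).Nonempty := by
    obtain ⟨i, hi⟩ := Function.ne_iff.1 hx
    exact ⟨i, by simpa using hi⟩
  obtain ⟨i₀, hi₀, hmin⟩ := exists_min_image _ (fun i => padicValNat 2 (x i)) hne
  have hx₀ : x i₀ ≠ 0 := (mem_filter.1 hi₀).2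
  have hndvd := pow_succ_padicValNat_not_dvd (p := 2) hx₀
  set t := padicValNat 2 (x i₀)
  obtain ⟨u, hu⟩ : 2 ^ t ∣ x i₀ := pow_padicValNat_dvd
  have hodd : ¬ 2 ∣ u := fun ⟨w, hw⟩ => hndvd ⟨w, by rw [hu, hw, pow_succ]; ring⟩
  refine ⟨i₀, t, u / 2, ?_, fun i => ?_⟩
  · rw [hu, pow_succ]
    conv_lhs => rw [show u = 2 * (u / 2) + 1 by omega]
    ring
  · by_cases hi : x i = 0
    · simp [hi]
    · exact (pow_dvd_pow 2 (hmin i (by simpa using hi))).trans pow_padicValNat_dvd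

theorem mooreMove_update [DecidableEq ι] (hk : 0 < k) {x : ι → ℕ} {i₀ : ι} {m : ℕ}
    (hm : m < x i₀) : MooreMove k x (Function.update x i₀ m) := by
  refine ⟨fun i => ?_, fun h => ?_, ?_⟩
  · rcases eq_or_ne i i₀ with rfl | hi
    · simpa using hm.le
    · simp [hi]
  · have := congrFun h i₀
    simp only [Function.update_self] at this
    omega
  · calc #{i | Function.update x i₀ m i < x i} ≤ #{i₀} := card_le_card fun i hi => by
          by_contra h
          simp_all
      _ ≤ k := by rw [card_singleton]; omega

theorem Balanced.apply_eq_of_mooreMove_update [DecidableEq ι] {x z : ι → ℕ} {i₀ : ι}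
    {m : ℕ} (hx : Balanced k x) (hz : Balanced k z) (hm : m ≤ x i₀)
    (hmove : MooreMove k (Function.update x i₀ m) z) : z i₀ = m := by
  obtain ⟨hzy, -, hcard⟩ := hmove
  have hzx : ∀ i, z i ≤ x i := fun i =>
    (hzy i).trans (update_le_iff.2 ⟨hm, fun _ _ => le_rfl⟩ i)
  have hzm : z i₀ ≤ m := by simpa using hzy i₀
  by_contra hne
  refine hx.not_mooreMove hz ⟨hzx, fun h => ?_, (card_le_card fun i hi => ?_).trans hcard⟩
  · have := congrFun h i₀
    omega
  · simp only [mem_filter, mem_univ, true_and] at hi ⊢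
    rcases eq_or_ne i i₀ with rfl | h
    · simp only [Function.update_self]
      omega
    · rwa [Function.update_of_ne h]

/-- A balanced reply `z` keeps pile `i₀` at `x i₀ - 1`, so it keeps all digit sums above `t`,
and it has to raise every digit sum below `t` from `0` to at least `k + 1`. -/
theorem Balanced.sum_le_of_mooreMove_update [DecidableEq ι] {x z : ι → ℕ} {i₀ : ι}
    {t v : ℕ} (hx : Balanced k x) (hz : Balanced k z) (hdvd : ∀ i, 2 ^ t ∣ x i)
    (hi₀ : x i₀ = 2 ^ (t + 1) * v + 2 ^ t)
    (hmove : MooreMove k (Function.update x i₀ (x i₀ - 1)) z) :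
    ∑ i, x i ≤ ∑ i, z i + (k + 1) := by
  have hz₀ := hx.apply_eq_of_mooreMove_update hz (Nat.sub_le _ _) hmove
  obtain ⟨hzy, -, hcard⟩ := hmove
  set T : Finset ι := {i | z i < Function.update x i₀ (x i₀ - 1) i}
  have hzx : ∀ i, z i ≤ x i := fun i =>
    (hzy i).trans (update_le_iff.2 ⟨Nat.sub_le _ _, fun _ _ => le_rfl⟩ i)
  have hmemT : ∀ i ≠ i₀, z i ≠ x i → i ∈ T := fun i hi hne => by
    simpa [T, hi] using (hzx i).lt_of_ne hne
  have hhigh : ∀ j, t < j → digitSum j x = digitSum j z := fun j hj =>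
    hx.digitSum_eq hz <| (card_le_card fun i hi => by
      have hi' : (x i).testBit j ≠ (z i).testBit j := (mem_filter.1 hi).2
      rcases eq_or_ne i i₀ with rfl | h
      · rw [hz₀, testBit_sub_one_of_gt hi₀ hj] at hi'
        exact absurd rfl hi'
      · exact hmemT i h fun h' => hi' (h' ▸ rfl)).trans hcard
  have htop : (digitSum t x : ℤ) - digitSum t z ≤ k + 1 := by
    have hsub : ({i | (x i).testBit t ≠ (z i).testBit t} : Finset ι) ⊆ insert i₀ T :=
      fun i hi => by
        rcases eq_or_ne i i₀ with rfl | h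
        · exact mem_insert_self _ _
        · exact mem_insert_of_mem (hmemT i h fun h' => (mem_filter.1 hi).2 (h' ▸ rfl))
    have hcard' := (card_le_card hsub).trans (card_insert_le i₀ T)
    have := (le_abs_self _).trans (abs_digitSum_sub_le x z t)
    omega
  have hlow : ∀ j < t, (digitSum j x : ℤ) - digitSum j z ≤ -(k + 1) := fun j hj => by
    have h0 : digitSum j x = 0 := sum_eq_zero fun i _ => by
      rw [testBit_eq_false_of_two_pow_dvd (hdvd i) hj]
      rfl
    have h1 := hz.le_digitSum (i := i₀) (hz₀ ▸ testBit_sub_one_of_lt hi₀ hj)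
    omega
  have ht : t < ∑ i, x i := Nat.lt_two_pow_self.trans_le <|
    (show 2 ^ t ≤ x i₀ by omega).trans
      (single_le_sum (fun i _ => Nat.zero_le (x i)) (mem_univ i₀))
  zify
  rw [← sub_le_iff_le_add', sum_sub_sum_eq_sum_digitSum_sub (lt_two_pow_sum x) hzx]
  exact sum_range_two_pow_mul_le ht hlow htop fun j hj => by rw [hhigh j hj, sub_self]

variable {R : (ι → ℕ) → ℕ}

def RemotenessFormula (k : ℕ) (R : (ι → ℕ) → ℕ) (x : ι → ℕ) : Prop :=
  (Balanced k x → R x = 2 * ((∑ i, x i) / (k + 1))) ∧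
    (¬ Balanced k x →
      ∃ z, MooreMove k x z ∧ Balanced k z ∧ R x = 2 * ((∑ i, z i) / (k + 1)) + 1)

theorem RemotenessFormula.even_iff {x : ι → ℕ} (h : RemotenessFormula k R x) :
    Even (R x) ↔ Balanced k x := by
  by_cases hx : Balanced k x
  · simp [hx, h.1 hx]
  · obtain ⟨z, -, -, hRx⟩ := h.2 hx
    simp [hx, hRx]

theorem remoteness_of_not_balanced (hR : IsRemoteness (MooreMove k) R) {x : ι → ℕ}
    (ih : ∀ y, MooreMove k x y → RemotenessFormula k R y) (hx : ¬ Balanced k x) :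
    ∃ z, MooreMove k x z ∧ Balanced k z ∧ R x = 2 * ((∑ i, z i) / (k + 1)) + 1 := by
  obtain ⟨y, hy, hyb⟩ := exists_mooreMove_balanced hx
  obtain ⟨z, hz, hze, hRx, -⟩ := (hR x).2.1 ⟨y, hy, (ih y hy).even_iff.2 hyb⟩
  have hzb := (ih z hz).even_iff.1 hze
  exact ⟨z, hz, hzb, by rw [hRx, (ih z hz).1 hzb]⟩

theorem remoteness_of_balanced (hk : 0 < k) (hR : IsRemoteness (MooreMove k) R)
    {x : ι → ℕ} (ih : ∀ y, MooreMove k x y → RemotenessFormula k R y) (hx : Balanced k x) :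
    R x = 2 * ((∑ i, x i) / (k + 1)) := by
  classical
  obtain ⟨q, hq⟩ := hx.dvd_sum
  rw [hq, Nat.mul_div_cancel_left _ k.succ_pos]
  have hreply : ∀ y, MooreMove k x y →
      ∃ z, MooreMove k y z ∧ Balanced k z ∧ R y = 2 * ((∑ i, z i) / (k + 1)) + 1 :=
    fun y hy => (ih y hy).2 fun hyb => hx.not_mooreMove hyb hy
  by_cases hx0 : x = 0
  · have hR0 : R x = 0 := (hR x).1 fun y hy => by
      simpa [hx0] using (MooreMove.sum_lt hy)
    simp [hx0] at hq
    rw [hR0, hq, mul_zero]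
  obtain ⟨i₀, t, v, hi₀, hdvd⟩ := exists_lowest_digit hx0
  have hpos : 0 < x i₀ := by rw [hi₀]; positivity
  have hmove₀ := mooreMove_update hk (Nat.sub_lt hpos one_pos)
  have hle : ∀ y, MooreMove k x y → R y + 1 ≤ 2 * q := fun y hy => by
    obtain ⟨z, hz, hzb, hRy⟩ := hreply y hy
    obtain ⟨q', hq'⟩ := hzb.dvd_sum
    have hlt := (MooreMove.sum_lt hz).trans (MooreMove.sum_lt hy)
    rw [hq, hq'] at hlt
    rw [hRy, hq', Nat.mul_div_cancel_left _ k.succ_pos]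
    have := Nat.lt_of_mul_lt_mul_left hlt
    omega
  have hge : 2 * q ≤ R (Function.update x i₀ (x i₀ - 1)) + 1 := by
    obtain ⟨z, hz, hzb, hRy⟩ := hreply _ hmove₀
    obtain ⟨q', hq'⟩ := hzb.dvd_sum
    have hsum := hx.sum_le_of_mooreMove_update hzb hdvd hi₀ hz
    rw [hq, hq', ← mul_add_one] at hsum
    rw [hRy, hq', Nat.mul_div_cancel_left _ k.succ_pos]
    have := Nat.le_of_mul_le_mul_left hsum k.succ_pos
    omega
  obtain ⟨y, hy, hRx, hmax⟩ := (hR x).2.2 ⟨_, hmove₀⟩ fun y hy hRy =>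
    hx.not_mooreMove ((ih y hy).even_iff.1 hRy) hy
  have := hmax _ hmove₀
  have := hle y hy
  omega

theorem remotenessFormula (hk : 0 < k) (hR : IsRemoteness (MooreMove k) R) (x : ι → ℕ) :
    RemotenessFormula k R x := by
  induction hS : ∑ i, x i using Nat.strong_induction_on generalizing x with
  | _ N ih =>
    have ih' : ∀ y, MooreMove k x y → RemotenessFormula k R y := fun y hy =>
      ih _ (hS ▸ MooreMove.sum_lt hy) y rfl
    exact ⟨remoteness_of_balanced hk hR ih', remoteness_of_not_balanced hR ih'⟩

end MooreNim

theorem moore_remoteness_of_pposition_general (n k : ℕ) (hk : 0 < k)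
    (R : (Fin n → ℕ) → ℕ) (hR : IsRemoteness (MooreMove k) R)
    (x : Fin n → ℕ) (hx : Even (R x)) :
    (k + 1) ∣ (∑ i, x i) ∧ R x = 2 * (∑ i, x i) / (k + 1) := by
  have hformula := MooreNim.remotenessFormula hk hR x
  have hbal := hformula.even_iff.1 hx
  have hdvd := hbal.dvd_sum
  exact ⟨hdvd, by rw [hformula.1 hbal, Nat.mul_div_assoc 2 hdvd]⟩

/-- If `x` is a P-position of Moore's NIM game NIM(n,k) (i.e. its Smith
remoteness value is even), then `k+1` divides the total number of stones
`S(x) = ∑ i, x i` and `R x = 2 S(x) / (k+1)`. -/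
theorem moore_remoteness_of_pposition (n k : ℕ) (hk : 0 < k) (hkn : k ≤ n)
    (R : (Fin n → ℕ) → ℕ) (hR : IsRemoteness (MooreMove k) R)
    (x : Fin n → ℕ) (hx : Even (R x)) :
    (k + 1) ∣ (∑ i, x i) ∧ R x = 2 * (∑ i, x i) / (k + 1) :=
  moore_remoteness_of_pposition_general n k hk R hR x hx
end

section
/- Let x be a position of Moore's NIM game NIM(n,k), and for each binary digit position j let a_j ∈ {0,1,…,k} be the residue of Σ_{i=1}^n x_{ij} modulo k+1, where x_i = Σ_j 2^j x_{ij} in binary. Then every move x → y from x to a P-position y satisfies S(y) ≥ S(x) − Σ_j 2^j a_j. -/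
theorem my_sum_testBit : ∀ (N n : ℕ), n < 2 ^ N →
    n = ∑ j ∈ Finset.range N, 2 ^ j * (n.testBit j).toNat := by
  intro N
  induction N with
  | zero => intro n h; interval_cases n; simp
  | succ N ih =>
    intro n h
    rw [Finset.sum_range_succ']
    have h2 : n / 2 < 2 ^ N := by
      rw [Nat.div_lt_iff_lt_mul (by norm_num)]
      calc n < 2 ^ (N + 1) := h
        _ = 2 ^ N * 2 := by ring
    have key := ih (n / 2) h2
    have hb : ∀ j, n.testBit (j + 1) = (n / 2).testBit j := fun j => Nat.testBit_succ n j
    have h0 : (n.testBit 0).toNat = n % 2 := by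
      rw [Nat.testBit_zero]
      rcases Nat.mod_two_eq_zero_or_one n with h | h <;> simp [h]
    calc n = 2 * (n / 2) + n % 2 := by omega
      _ = 2 * (∑ j ∈ Finset.range N, 2 ^ j * ((n / 2).testBit j).toNat) + n % 2 := by
            rw [← key]
      _ = (∑ j ∈ Finset.range N, 2 ^ (j + 1) * (n.testBit (j + 1)).toNat)
            + 2 ^ 0 * (n.testBit 0).toNat := by
            rw [Finset.mul_sum, h0]
            simp only [pow_zero, one_mul]
            congr 1
            refine Finset.sum_congr rfl fun j _ => ?_
            rw [hb j, pow_succ]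
            ring

theorem my_arith (k c d : ℕ) (h1 : c ≤ d + k) (h2 : d % (k + 1) = 0) :
    c ≤ d + c % (k + 1) := by
  obtain ⟨m, hm⟩ := Nat.dvd_of_mod_eq_zero h2
  have hc : (k + 1) * (c / (k + 1)) + c % (k + 1) = c := Nat.div_add_mod c (k + 1)
  have hq : c / (k + 1) ≤ m := by
    by_contra hq
    push_neg at hq
    have key : (k + 1) * m + (k + 1) ≤ (k + 1) * (c / (k + 1)) := by
      have := Nat.mul_le_mul_left (k + 1) hq
      calc (k + 1) * m + (k + 1) = (k + 1) * (m + 1) := by ring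
        _ ≤ (k + 1) * (c / (k + 1)) := this
    have hle : (k + 1) * (c / (k + 1)) ≤ c := Nat.mul_div_le c (k + 1)
    have hcontra : (k + 1) * m + (k + 1) ≤ (k + 1) * m + k := by
      calc (k + 1) * m + (k + 1) ≤ (k + 1) * (c / (k + 1)) := key
        _ ≤ c := hle
        _ ≤ d + k := h1
        _ = (k + 1) * m + k := by rw [hm]
    omega
  have h3 : (k + 1) * (c / (k + 1)) ≤ (k + 1) * m := Nat.mul_le_mul_left _ hq
  calc c = (k + 1) * (c / (k + 1)) + c % (k + 1) := hc.symm
    _ ≤ (k + 1) * m + c % (k + 1) := Nat.add_le_add_right h3 _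
    _ = d + c % (k + 1) := by rw [hm]

/-- P-positions of Moore's NIM (Moore's theorem): every binary column sum is
congruent to `0` modulo `k+1`. -/
def MoorePPos {ι : Type*} [Fintype ι] (k : ℕ) (x : ι → ℕ) : Prop :=
  ∀ j : ℕ, (∑ i, ((x i).testBit j).toNat) % (k + 1) = 0

/-- Every move from `x` to a P-position `y` in NIM(n,k) satisfies
`S(y) ≥ S(x) - ∑_j 2^j a_j`, where `a_j` is the residue modulo `k+1` of the
`j`-th binary column sum of `x` (stated additively over ℕ). -/
theorem moore_stones_lower_bound (n k : ℕ) (hk : 0 < k) (hkn : k ≤ n)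
    (x y : Fin n → ℕ) (N : ℕ) (hN : ∀ i, x i < 2 ^ N)
    (hmv : MooreMove k x y) (hy : MoorePPos k y) :
    ∑ i, x i ≤
      (∑ i, y i) +
        ∑ j ∈ Finset.range N, 2 ^ j * ((∑ i, ((x i).testBit j).toNat) % (k + 1)) := by
  obtain ⟨hle, -, hcard⟩ := hmv
  have hyN : ∀ i, y i < 2 ^ N := fun i => lt_of_le_of_lt (hle i) (hN i)
  -- rewrite both sums of piles as weighted column sums
  have hx : ∑ i, x i = ∑ j ∈ Finset.range N, 2 ^ j * ∑ i, ((x i).testBit j).toNat := by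
    calc ∑ i, x i = ∑ i, ∑ j ∈ Finset.range N, 2 ^ j * ((x i).testBit j).toNat :=
          Finset.sum_congr rfl fun i _ => my_sum_testBit N (x i) (hN i)
      _ = ∑ j ∈ Finset.range N, ∑ i, 2 ^ j * ((x i).testBit j).toNat := Finset.sum_comm
      _ = _ := Finset.sum_congr rfl fun j _ => (Finset.mul_sum _ _ _).symm
  have hys : ∑ i, y i = ∑ j ∈ Finset.range N, 2 ^ j * ∑ i, ((y i).testBit j).toNat := by
    calc ∑ i, y i = ∑ i, ∑ j ∈ Finset.range N, 2 ^ j * ((y i).testBit j).toNat :=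
          Finset.sum_congr rfl fun i _ => my_sum_testBit N (y i) (hyN i)
      _ = ∑ j ∈ Finset.range N, ∑ i, 2 ^ j * ((y i).testBit j).toNat := Finset.sum_comm
      _ = _ := Finset.sum_congr rfl fun j _ => (Finset.mul_sum _ _ _).symm
  rw [hx, hys, ← Finset.sum_add_distrib]
  refine Finset.sum_le_sum fun j _ => ?_
  rw [← Nat.mul_add]
  refine Nat.mul_le_mul_left _ ?_
  -- column-wise bound
  set F : Finset (Fin n) := Finset.univ.filter fun i => y i < x i with hF
  have hcol : ∑ i, ((x i).testBit j).toNat ≤ (∑ i, ((y i).testBit j).toNat) + k := by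
    have hsplit : ∑ i, ((x i).testBit j).toNat =
        (∑ i ∈ F, ((x i).testBit j).toNat) + ∑ i ∈ Fᶜ, ((x i).testBit j).toNat :=
      (Finset.sum_add_sum_compl F _).symm
    have h1 : ∑ i ∈ F, ((x i).testBit j).toNat ≤ k := by
      calc ∑ i ∈ F, ((x i).testBit j).toNat ≤ ∑ _i ∈ F, 1 :=
            Finset.sum_le_sum fun i _ => Bool.toNat_le _
        _ = F.card := by simp
        _ ≤ k := hcard
    have h2 : ∑ i ∈ Fᶜ, ((x i).testBit j).toNat ≤ ∑ i, ((y i).testBit j).toNat := by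
      have heq : ∀ i ∈ Fᶜ, ((x i).testBit j).toNat = ((y i).testBit j).toNat := by
        intro i hi
        have : ¬ (y i < x i) := by
          simpa [hF] using hi
        have : y i = x i := le_antisymm (hle i) (not_lt.mp this)
        rw [this]
      rw [Finset.sum_congr rfl heq]
      exact Finset.sum_le_sum_of_subset (Finset.subset_univ _)
    omega
  exact my_arith k _ _ hcol (hy j)
end

section
/- Let G = (V,E) be a finite graph and c a positive integer. Choose pairwise disjoint sets I_e (e ∈ E) of size c, disjoint from V, set n = |V| + c|E| and k = c, and assign to each edge e ∈ E a distinct binary digit position j_e. Define a position x of Moore's NIM game NIM(n,k) with one pile for each element of V ∪ ⋃_{e∈E} I_e, where the binary digit of pile v ∈ V at position j_e equals 1 iff v ∈ e, and the binary digit of pile i ∈ I_f at position j_e equals 1 iff e = f (all other digits are 0). Then x is an N-position, and there exists a move from x to a P-position y with S(y) = S(x) − Σ_{e∈E} 2^{j_e} (a 'maximal move') if and only if G has a vertex cover of size at most c. -/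
/-!
In the reduction position `x`, the column of digit `je e` holds exactly `c + 2` ones (the two
endpoints of `e` and the `c` piles of `e`) and every other column is empty, so `x` is an
N-position. A move changes at most `c` piles, so a P-position `y` reached from `x` has empty
columns outside the digits `je e` and `(c + 1) * t e` ones in column `je e` with `t e ≤ 2`. If the
move is maximal, comparing stone counts gives `∑ 2 ^ je e * t e = ∑ 2 ^ je e`, and uniqueness
of binary expansions forces `t e = 1`: every column loses a one, so the changed piles meet every
column. Sending each pile to a vertex (itself, or an endpoint of its edge) turns them into a
vertex cover of size at most `c`. Conversely, given such a cover, deleting from each edge's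
column the one of a chosen covering vertex is a maximal move.
-/

open Finset

theorem Nat.testBit_sum_two_pow (s : Finset ℕ) (j : ℕ) :
    (∑ i ∈ s, 2 ^ i).testBit j ↔ j ∈ s := by
  rw [← Nat.mem_bitIndices, ← List.mem_toFinset, toFinset_bitIndices_sum_two_pow]

theorem Nat.sum_two_pow_mul_testBit {n : ℕ} {D : Finset ℕ}
    (hD : ∀ j, n.testBit j → j ∈ D) :
    ∑ j ∈ D, 2 ^ j * (n.testBit j).toNat = n := by
  have hbits : {j ∈ D | n.testBit j} = n.bitIndices.toFinset := by
    ext j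
    simpa using hD j
  calc ∑ j ∈ D, 2 ^ j * (n.testBit j).toNat = ∑ j ∈ D with n.testBit j, 2 ^ j := by
        rw [sum_filter]
        exact sum_congr rfl fun j _ => by cases n.testBit j <;> simp
    _ = n := by rw [hbits, sum_toFinset_bitIndices_two_pow]

/-- The positions where `t` is `2` and those where it is `0` have the same binary value, hence
form the same set; being disjoint, both are empty. -/
theorem Nat.eq_one_of_sum_two_pow_mul_eq {s : Finset ℕ} {t : ℕ → ℕ}
    (ht : ∀ j ∈ s, t j ≤ 2) (h : ∑ j ∈ s, 2 ^ j * t j = ∑ j ∈ s, 2 ^ j) :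
    ∀ j ∈ s, t j = 1 := by
  have hpoint : ∀ j ∈ s, 2 ^ j * t j + (if t j = 0 then 2 ^ j else 0) =
      2 ^ j + (if t j = 2 then 2 ^ j else 0) := by
    intro j hj
    have := ht j hj
    interval_cases t j <;> simp [mul_two]
  have hsum : ∑ j ∈ s with t j = 0, 2 ^ j = ∑ j ∈ s with t j = 2, 2 ^ j := by
    have := sum_congr rfl hpoint
    rw [sum_add_distrib, sum_add_distrib, h, ← sum_filter, ← sum_filter] at this
    omega
  have heq := geomSum_injective le_rfl hsum
  intro j hj
  have := ht j hj
  have h0 : t j ≠ 0 := fun h0 => by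
    have : j ∈ {j ∈ s | t j = 2} := heq ▸ mem_filter.2 ⟨hj, h0⟩
    simp [h0] at this
  have h2 : t j ≠ 2 := fun h2 => by
    have : j ∈ {j ∈ s | t j = 0} := heq ▸ mem_filter.2 ⟨hj, h2⟩
    simp [h2] at this
  omega

section ColumnSum

variable {ι : Type*} [Fintype ι]

def columnSum (z : ι → ℕ) (j : ℕ) : ℕ := ∑ i, ((z i).testBit j).toNat

theorem sum_eq_sum_two_pow_mul_columnSum {z : ι → ℕ} {D : Finset ℕ}
    (hD : ∀ i j, (z i).testBit j → j ∈ D) :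
    ∑ i, z i = ∑ j ∈ D, 2 ^ j * columnSum z j := by
  conv_lhs => rw [← sum_congr rfl fun i _ => Nat.sum_two_pow_mul_testBit (hD i)]
  rw [sum_comm]
  simp only [columnSum, mul_sum]

theorem testBit_eq_false_of_columnSum_eq_zero {z : ι → ℕ} {j : ℕ} (h : columnSum z j = 0)
    (i : ι) : (z i).testBit j = false := by
  have := (sum_eq_zero_iff.1 h) i (mem_univ i)
  simpa using this

theorem columnSum_le_columnSum_of_forall_testBit {x y : ι → ℕ} {j : ℕ}
    (h : ∀ i, (x i).testBit j → y i = x i) : columnSum x j ≤ columnSum y j :=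
  sum_le_sum fun i _ => by
    by_cases hb : (x i).testBit j
    · rw [h i hb]
    · simp [hb]

theorem MooreMove.columnSum_le {k : ℕ} {x y : ι → ℕ} (hmove : MooreMove k x y) (j : ℕ) :
    columnSum y j ≤ columnSum x j + k := by
  classical
  obtain ⟨hle, -, hcard⟩ := hmove
  set U : Finset ι := {i | y i < x i}
  have hunchanged : ∑ i ∈ Uᶜ, ((y i).testBit j).toNat ≤ columnSum x j :=
    calc ∑ i ∈ Uᶜ, ((y i).testBit j).toNat = ∑ i ∈ Uᶜ, ((x i).testBit j).toNat :=
          sum_congr rfl fun i hi => by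
            rw [le_antisymm (hle i) (not_lt.1 (by simpa [U] using hi))]
      _ ≤ columnSum x j := sum_le_univ_sum_of_nonneg fun _ => Nat.zero_le _
  have hchanged : ∑ i ∈ U, ((y i).testBit j).toNat ≤ k :=
    (sum_le_card_nsmul U _ 1 fun i _ => Bool.toNat_le _).trans (by simpa using hcard)
  rw [columnSum, ← sum_compl_add_sum U]
  omega

theorem MooreMove.columnSum_eq_of_maximal {k : ℕ} {x y : ι → ℕ} {D : Finset ℕ}
    (hmove : MooreMove k x y) (hy : MoorePPos k y)
    (hx0 : ∀ j ∉ D, columnSum x j = 0) (hxD : ∀ j ∈ D, columnSum x j = k + 2)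
    (hsum : ∑ i, y i + ∑ j ∈ D, 2 ^ j = ∑ i, x i) :
    ∀ j ∈ D, columnSum y j = k + 1 := by
  have hdvd (j : ℕ) : k + 1 ∣ columnSum y j := Nat.dvd_of_mod_eq_zero (hy j)
  have hy0 : ∀ j ∉ D, columnSum y j = 0 := fun j hj =>
    Nat.eq_zero_of_dvd_of_lt (hdvd j) (by
      have := hmove.columnSum_le j
      rw [hx0 j hj] at this
      omega)
  have hbits (z : ι → ℕ) (hz : ∀ j ∉ D, columnSum z j = 0) (i : ι) (j : ℕ)
      (hb : (z i).testBit j) : j ∈ D :=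
    by_contra fun hj => by simp [testBit_eq_false_of_columnSum_eq_zero (hz j hj) i] at hb
  choose t ht using hdvd
  have ht2 : ∀ j ∈ D, t j ≤ 2 := fun j hj => by
    have := hmove.columnSum_le j
    rw [hxD j hj, ht j] at this
    nlinarith
  have hy_sum : ∑ i, y i = (k + 1) * ∑ j ∈ D, 2 ^ j * t j := by
    rw [sum_eq_sum_two_pow_mul_columnSum (hbits y hy0), mul_sum]
    exact sum_congr rfl fun j _ => by rw [ht j]; ring
  have hx_sum : ∑ i, x i = (k + 2) * ∑ j ∈ D, 2 ^ j := by
    rw [sum_eq_sum_two_pow_mul_columnSum (hbits x hx0), mul_sum]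
    exact sum_congr rfl fun j hj => by rw [hxD j hj]; ring
  have htsum : ∑ j ∈ D, 2 ^ j * t j = ∑ j ∈ D, 2 ^ j :=
    Nat.eq_of_mul_eq_mul_left k.succ_pos (by rw [hy_sum, hx_sum] at hsum; linarith)
  intro j hj
  rw [ht j, Nat.eq_one_of_sum_two_pow_mul_eq ht2 htsum j hj, mul_one]

end ColumnSum

section IncidencePosition

variable {ι α : Type*} {s : Finset α} {g : α → ℕ} {k : ℕ} {i : ι}
  {R R' : ι → α → Prop} [∀ i a, Decidable (R i a)] [∀ i a, Decidable (R' i a)]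

def incidencePosition (s : Finset α) (g : α → ℕ) (R : ι → α → Prop)
    [∀ i a, Decidable (R i a)] (i : ι) : ℕ :=
  ∑ a ∈ s with R i a, 2 ^ g a

theorem incidencePosition_mono (h : ∀ a, R' i a → R i a) :
    incidencePosition s g R' i ≤ incidencePosition s g R i :=
  sum_le_sum_of_subset (monotone_filter_right s fun a _ => h a)

theorem incidencePosition_congr (h : ∀ a ∈ s, R' i a ↔ R i a) :
    incidencePosition s g R' i = incidencePosition s g R i :=
  sum_congr (filter_congr h) fun _ _ => rfl

theorem testBit_incidencePosition (hg : Set.InjOn g s) (i : ι) (j : ℕ) :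
    (incidencePosition s g R i).testBit j ↔ ∃ a ∈ s, R i a ∧ g a = j := by
  classical
  have hg' : Set.InjOn g (s.filter (R i)) := hg.mono (coe_subset.2 (filter_subset _ _))
  rw [incidencePosition, ← sum_image (f := fun j => 2 ^ j) hg', Nat.testBit_sum_two_pow]
  simp [and_assoc]

theorem testBit_incidencePosition_apply (hg : Set.InjOn g s) (i : ι) {a : α} (ha : a ∈ s) :
    (incidencePosition s g R i).testBit (g a) ↔ R i a := by
  rw [testBit_incidencePosition hg]
  exact ⟨fun ⟨b, hb, hR, hgb⟩ => hg hb ha hgb ▸ hR, fun h => ⟨a, ha, h, rfl⟩⟩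

variable [Fintype ι]

theorem columnSum_incidencePosition_apply (hg : Set.InjOn g s) {a : α} (ha : a ∈ s) :
    columnSum (incidencePosition s g R) (g a) = #{i | R i a} := by
  rw [columnSum, card_filter]
  refine sum_congr rfl fun i _ => ?_
  have := testBit_incidencePosition_apply (R := R) hg i ha
  cases hb : (incidencePosition s g R i).testBit (g a) <;> simp_all

theorem columnSum_incidencePosition_of_notMem (hg : Set.InjOn g s) {j : ℕ}
    (hj : j ∉ s.image g) : columnSum (incidencePosition s g R) j = 0 := by
  classical
  refine sum_eq_zero fun i _ => ?_
  have : ¬ (incidencePosition s g R i).testBit j := by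
    rw [testBit_incidencePosition hg]
    rintro ⟨a, ha, -, rfl⟩
    exact hj (mem_image_of_mem g ha)
  simpa using this

theorem moorePPos_incidencePosition_iff (hg : Set.InjOn g s) :
    MoorePPos k (incidencePosition s g R) ↔ ∀ a ∈ s, k + 1 ∣ #{i | R i a} := by
  classical
  refine ⟨fun h a ha => ?_, fun h j => ?_⟩
  · rw [← columnSum_incidencePosition_apply hg ha]
    exact Nat.dvd_of_mod_eq_zero (h (g a))
  · change columnSum _ j % (k + 1) = 0
    by_cases hj : j ∈ s.image g
    · obtain ⟨a, ha, rfl⟩ := mem_image.1 hj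
      rw [columnSum_incidencePosition_apply hg ha]
      exact Nat.mod_eq_zero_of_dvd (h a ha)
    · rw [columnSum_incidencePosition_of_notMem hg hj, Nat.zero_mod]

theorem sum_incidencePosition :
    ∑ i, incidencePosition s g R i = ∑ a ∈ s, #{i | R i a} * 2 ^ g a := by
  simp only [incidencePosition, sum_filter]
  rw [sum_comm]
  simp [sum_ite]

end IncidencePosition

section MaximalMove

variable {ι α : Type*} [Fintype ι] {s : Finset α} {g : α → ℕ} {k : ℕ}
  {R : ι → α → Prop} [∀ i a, Decidable (R i a)]

theorem not_moorePPos_incidencePosition (hg : Set.InjOn g s) (hs : s.Nonempty) (hk : 0 < k)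
    (hcol : ∀ a ∈ s, #{i | R i a} = k + 2) : ¬ MoorePPos k (incidencePosition s g R) := by
  rw [moorePPos_incidencePosition_iff hg]
  obtain ⟨a, ha⟩ := hs
  intro h
  have h2 := h a ha
  rw [hcol a ha, show k + 2 = k + 1 + 1 by rfl, Nat.dvd_add_right dvd_rfl, Nat.dvd_one] at h2
  omega

theorem exists_hitting_of_maximal_move (hg : Set.InjOn g s)
    (hcol : ∀ a ∈ s, #{i | R i a} = k + 2) {y : ι → ℕ}
    (hmove : MooreMove k (incidencePosition s g R) y) (hy : MoorePPos k y)
    (hsum : ∑ i, y i + ∑ a ∈ s, 2 ^ g a = ∑ i, incidencePosition s g R i) :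
    ∃ P : Finset ι, #P ≤ k ∧ ∀ a ∈ s, ∃ i ∈ P, R i a := by
  classical
  set x := incidencePosition s g R
  have hcolx : ∀ j ∈ s.image g, columnSum x j = k + 2 := by
    simp only [mem_image]
    rintro _ ⟨a, ha, rfl⟩
    rw [columnSum_incidencePosition_apply hg ha, hcol a ha]
  have hcoly := hmove.columnSum_eq_of_maximal hy
    (fun j hj => columnSum_incidencePosition_of_notMem hg hj) hcolx (by rwa [sum_image hg])
  refine ⟨({i | y i < x i} : Finset ι), hmove.2.2, fun a ha => ?_⟩
  by_contra! hnone
  have hunchanged : columnSum x (g a) ≤ columnSum y (g a) :=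
    columnSum_le_columnSum_of_forall_testBit fun i hi =>
      le_antisymm (hmove.1 i) (not_lt.1 fun hlt =>
        hnone i (by simpa using hlt) ((testBit_incidencePosition_apply hg i ha).1 hi))
  have := hcolx (g a) (mem_image_of_mem g ha)
  have := hcoly (g a) (mem_image_of_mem g ha)
  omega

theorem exists_maximal_move_of_hitting (hg : Set.InjOn g s) (hs : s.Nonempty)
    (hcol : ∀ a ∈ s, #{i | R i a} = k + 2) {P : Finset ι} (hPk : #P ≤ k)
    (hP : ∀ a ∈ s, ∃ i ∈ P, R i a) :
    ∃ y, MooreMove k (incidencePosition s g R) y ∧ MoorePPos k y ∧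
      ∑ i, y i + ∑ a ∈ s, 2 ^ g a = ∑ i, incidencePosition s g R i := by
  classical
  have : Nonempty ι := let ⟨a, ha⟩ := hs; let ⟨i, _⟩ := hP a ha; ⟨i⟩
  choose! π hπP hπR using hP
  set x := incidencePosition s g R
  set y := incidencePosition s g fun i a => R i a ∧ i ≠ π a
  have hcoly : ∀ a ∈ s, #{i | R i a ∧ i ≠ π a} = k + 1 := fun a ha => by
    have : ({i | R i a ∧ i ≠ π a} : Finset ι) = ({i | R i a} : Finset ι).erase (π a) := by
      ext; simp [and_comm]
    rw [this, card_erase_of_mem (by simpa using hπR a ha), hcol a ha]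
    rfl
  have hsum : ∑ i, y i + ∑ a ∈ s, 2 ^ g a = ∑ i, x i := by
    rw [sum_incidencePosition, sum_incidencePosition, ← sum_add_distrib]
    exact sum_congr rfl fun a ha => by rw [hcoly a ha, hcol a ha]; ring
  have hchanged : ({i | y i < x i} : Finset ι) ⊆ P := fun i hi => by
    by_contra hiP
    refine (mem_filter.1 hi).2.ne (incidencePosition_congr fun a ha => ?_)
    exact and_iff_left fun h => hiP (h ▸ hπP a ha)
  refine ⟨y, ⟨fun i => incidencePosition_mono fun a h => h.1, fun h => ?_,
    (card_le_card hchanged).trans hPk⟩,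
    (moorePPos_incidencePosition_iff hg).2 fun a ha => by rw [hcoly a ha], hsum⟩
  rw [h, add_eq_left] at hsum
  exact (sum_pos (fun a _ => by positivity) hs).ne' hsum

theorem exists_maximal_move_incidencePosition_iff (hg : Set.InjOn g s) (hs : s.Nonempty)
    (hcol : ∀ a ∈ s, #{i | R i a} = k + 2) :
    (∃ y, MooreMove k (incidencePosition s g R) y ∧ MoorePPos k y ∧
        ∑ i, y i + ∑ a ∈ s, 2 ^ g a = ∑ i, incidencePosition s g R i) ↔
      ∃ P : Finset ι, #P ≤ k ∧ ∀ a ∈ s, ∃ i ∈ P, R i a :=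
  ⟨fun ⟨_, hmove, hy, hsum⟩ => exists_hitting_of_maximal_move hg hcol hmove hy hsum,
    fun ⟨_, hPk, hP⟩ => exists_maximal_move_of_hitting hg hs hcol hPk hP⟩

end MaximalMove

section VertexCover

variable {V : Type*} [Fintype V] [DecidableEq V] (G : SimpleGraph V) [DecidableRel G.Adj]
  (c : ℕ)

/-- The piles of the reduction that carry the digit of edge `e`: its two endpoints and the `c`
piles of `e`. -/
def coverIncidence : V ⊕ (G.edgeFinset × Fin c) → Sym2 V → Prop
  | .inl v, e => v ∈ e
  | .inr p, e => (p.1 : Sym2 V) = e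

instance (i : V ⊕ (G.edgeFinset × Fin c)) (e : Sym2 V) : Decidable (coverIncidence G c i e) :=
  match i with
  | .inl v => inferInstanceAs (Decidable (v ∈ e))
  | .inr p => inferInstanceAs (Decidable ((p.1 : Sym2 V) = e))

theorem card_coverIncidence {e : Sym2 V} (he : e ∈ G.edgeFinset) :
    #{i | coverIncidence G c i e} = c + 2 := by
  have hV : #{v | v ∈ e} = 2 := by
    rw [show ({v | v ∈ e} : Finset V) = e.toFinset by ext; simp [Sym2.mem_toFinset]]
    exact e.card_toFinset_of_not_isDiag (G.not_isDiag_of_mem_edgeSet (G.mem_edgeFinset.1 he))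
  have hI : ∑ p : G.edgeFinset, ∑ _ : Fin c, (if (p : Sym2 V) = e then 1 else 0) = c := by
    rw [sum_coe_sort G.edgeFinset fun e' => ∑ _ : Fin c, if e' = e then 1 else 0]
    simp [he]
  rw [card_filter] at hV
  rw [card_filter, Fintype.sum_sum_type, Fintype.sum_prod_type, add_comm]
  exact congrArg₂ (· + ·) hI hV

theorem exists_coverIncidence_iff {m : ℕ} :
    (∃ P : Finset (V ⊕ (G.edgeFinset × Fin c)), #P ≤ m ∧
        ∀ e ∈ G.edgeFinset, ∃ i ∈ P, coverIncidence G c i e) ↔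
      ∃ C : Finset V, #C ≤ m ∧ ∀ e ∈ G.edgeFinset, ∃ v ∈ C, v ∈ e := by
  constructor
  · rintro ⟨P, hPm, hP⟩
    let f : V ⊕ (G.edgeFinset × Fin c) → V := Sum.elim id fun p => (p.1 : Sym2 V).out.1
    refine ⟨P.image f, card_image_le.trans hPm, fun e he => ?_⟩
    obtain ⟨i, hiP, hi⟩ := hP e he
    refine ⟨f i, mem_image_of_mem f hiP, ?_⟩
    rcases i with v | p
    · exact hi
    · exact (hi : (p.1 : Sym2 V) = e) ▸ Sym2.out_fst_mem _
  · rintro ⟨C, hCm, hC⟩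
    refine ⟨C.image .inl, card_image_le.trans hCm, fun e he => ?_⟩
    obtain ⟨v, hvC, hv⟩ := hC e he
    exact ⟨.inl v, mem_image_of_mem _ hvC, hv⟩

end VertexCover

/-- The vertex-cover reduction: given a finite graph `G` with at least one edge
and a positive integer `c`, piles are indexed by `V ⊕ (E × Fin c)`, each edge
`e` gets a distinct binary digit position `je e`; the pile of `v ∈ V` has digit
`1` at position `je e` iff `v ∈ e`, and the pile of `(e,i) ∈ E × Fin c` has the
single digit `1` at position `je e`.  Then the resulting position `x` of
Moore's NIM with `k = c` is an N-position, and a maximal move from `x` (a move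
to a P-position removing exactly `∑_{e∈E} 2^{je e}` stones) exists iff `G` has
a vertex cover of size at most `c`. -/
theorem maxnim_iff_vertexCover {V : Type*} [Fintype V] [DecidableEq V]
    (G : SimpleGraph V) [DecidableRel G.Adj] (hE : G.edgeFinset.Nonempty)
    (c : ℕ) (hc : 0 < c)
    (je : Sym2 V → ℕ) (hje : ∀ e ∈ G.edgeFinset, ∀ e' ∈ G.edgeFinset, je e = je e' → e = e')
    (x : (V ⊕ (↥G.edgeFinset × Fin c)) → ℕ)
    (hxv : ∀ v : V, x (Sum.inl v) = ∑ e ∈ G.edgeFinset, if v ∈ e then 2 ^ je e else 0)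
    (hxe : ∀ (e : ↥G.edgeFinset) (i : Fin c), x (Sum.inr (e, i)) = 2 ^ je ↑e) :
    ¬ MoorePPos c x ∧
      ((∃ y, MooreMove c x y ∧ MoorePPos c y ∧
          (∑ i, y i) + (∑ e ∈ G.edgeFinset, 2 ^ je e) = ∑ i, x i) ↔
        ∃ C : Finset V, C.card ≤ c ∧ ∀ e ∈ G.edgeFinset, ∃ v ∈ C, v ∈ e) := by
  have hx : x = incidencePosition G.edgeFinset je (coverIncidence G c) := by
    funext i
    rcases i with v | ⟨e, i⟩
    · rw [hxv, incidencePosition, sum_filter]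
      rfl
    · rw [hxe, incidencePosition, sum_filter]
      exact ((sum_ite_eq G.edgeFinset (e : Sym2 V) fun a => 2 ^ je a).trans (if_pos e.2)).symm
  have hcol := fun e (he : e ∈ G.edgeFinset) => card_coverIncidence G c he
  subst hx
  exact ⟨not_moorePPos_incidencePosition hje hE hc hcol,
    (exists_maximal_move_incidencePosition_iff hje hE hcol).trans (exists_coverIncidence_iff G c)⟩
end

section
/- Let 𝓗 ⊆ 2^{[n]} \ {∅} be a hypergraph with 𝓗 ∩ 𝓗^t = ∅. Then for every k ∈ ℤ_{≥0}, N(k) = { x ∈ ℤ_{≥0}^n : m(x) = k, M(x) ∉ 𝓗^t, and 𝓗(x) ∩ 𝓗(x)^t ≠ ∅ }. -/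
/-- A move of the hypergraph NIM game `NIM_H`: strictly decrease the piles
whose index set forms a hyperedge of `H`, leaving all other piles unchanged. -/
def HypMove {n : ℕ} (H : Finset (Finset (Fin n))) (x y : Fin n → ℕ) : Prop :=
  (∀ i, y i ≤ x i) ∧ y ≠ x ∧ (Finset.univ.filter fun i => y i < x i) ∈ H

/-- `m(x)`, the minimum pile size of the position `x`. -/
noncomputable def mval {n : ℕ} (x : Fin n → ℕ) : ℕ := sInf (Set.range x)

/-- `M(x)`, the set of indices of minimum piles of the position `x`. -/
noncomputable def Mset {n : ℕ} (x : Fin n → ℕ) : Finset (Fin n) :=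
  Finset.univ.filter fun i => x i = mval x

/-- `T` is a transversal of the hypergraph `H`, i.e. `T ∈ H^t`. -/
def IsTransversal {n : ℕ} (H : Finset (Finset (Fin n))) (T : Finset (Fin n)) : Prop :=
  ∀ A ∈ H, (T ∩ A).Nonempty

/-- `P(k)`: positions with `m(x) = k` and `M(x) ∈ H^t`. -/
def PPos {n : ℕ} (H : Finset (Finset (Fin n))) (k : ℕ) (x : Fin n → ℕ) : Prop :=
  mval x = k ∧ IsTransversal H (Mset x)

/-- `N(k)`: positions from which a move to `P(k)` exists. -/
def NPos {n : ℕ} (H : Finset (Finset (Fin n))) (k : ℕ) (x : Fin n → ℕ) : Prop :=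
  ∃ y, HypMove H x y ∧ PPos H k y

/-- `H_S`, the subhypergraph of `H` induced by `S`. -/
def subHyp {n : ℕ} (H : Finset (Finset (Fin n))) (S : Finset (Fin n)) :
    Finset (Finset (Fin n)) :=
  H.filter (· ⊆ S)

/-- `H(x) = H_{[n] \ M(x)}`. -/
noncomputable def Hofx {n : ℕ} (H : Finset (Finset (Fin n))) (x : Fin n → ℕ) :
    Finset (Finset (Fin n)) :=
  subHyp H (Finset.univ \ Mset x)

/-- `H` is minimally transversal-free: `H ∩ H^t = ∅` and every nonempty proper
subset `S ⊊ [n]` admits a hyperedge `A ∈ H_S` that is a transversal of `H_S`. -/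
def MTF {n : ℕ} (H : Finset (Finset (Fin n))) : Prop :=
  (∀ A ∈ H, ¬ IsTransversal H A) ∧
  ∀ S : Finset (Fin n), S.Nonempty → S ≠ Finset.univ →
    ∃ A ∈ subHyp H S, IsTransversal (subHyp H S) A

lemma mval_le {n : ℕ} (x : Fin n → ℕ) (i : Fin n) : mval x ≤ x i :=
  Nat.sInf_le ⟨i, rfl⟩

lemma exists_mval {n : ℕ} (hn : 0 < n) (x : Fin n → ℕ) : ∃ i, x i = mval x := by
  have h : (Set.range x).Nonempty := ⟨x ⟨0, hn⟩, ⟨0, hn⟩, rfl⟩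
  exact Nat.sInf_mem h

lemma mem_Mset {n : ℕ} (x : Fin n → ℕ) (i : Fin n) : i ∈ Mset x ↔ x i = mval x := by
  simp [Mset]

lemma mval_eq {n : ℕ} (x : Fin n → ℕ) {c : ℕ} (hlb : ∀ i, c ≤ x i)
    (h : ∃ i, x i = c) : mval x = c := by
  obtain ⟨i, hi⟩ := h
  refine le_antisymm (hi ▸ mval_le x i) ?_
  obtain ⟨j, hj⟩ := Nat.sInf_mem (⟨x i, i, rfl⟩ : (Set.range x).Nonempty)
  calc c ≤ x j := hlb j
    _ = mval x := hj

/-- If `H ∩ H^t = ∅`, then `N(k)` consists exactly of the positions `x` with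
`m(x) = k`, `M(x) ∉ H^t`, and `H(x) ∩ H(x)^t ≠ ∅`. -/
theorem hyp_nk_characterization (n : ℕ) (hn : 0 < n)
    (H : Finset (Finset (Fin n))) (hH : ∅ ∉ H)
    (hfree : ∀ A ∈ H, ¬ IsTransversal H A)
    (k : ℕ) (x : Fin n → ℕ) :
    NPos H k x ↔
      mval x = k ∧ ¬ IsTransversal H (Mset x) ∧
        ∃ A ∈ Hofx H x, IsTransversal (Hofx H x) A := by
  constructor
  · rintro ⟨y, ⟨hle, hne, hD⟩, hmy, htr⟩
    set D := Finset.univ.filter (fun i => y i < x i) with hDdef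
    have hDmem : ∀ i, i ∈ D ↔ y i < x i := by
      intro i; simp [hDdef]
    have hkle : k ≤ mval x := by
      obtain ⟨i, hi⟩ := exists_mval hn x
      calc k = mval y := hmy.symm
        _ ≤ y i := mval_le y i
        _ ≤ x i := hle i
        _ = mval x := hi
    have hmx : mval x = k := by
      by_contra hc
      have hk : k < mval x := lt_of_le_of_ne hkle (Ne.symm hc)
      have hsub : Mset y ⊆ D := by
        intro i hi
        rw [mem_Mset] at hi
        rw [hDmem]
        calc y i = mval y := hi
          _ = k := hmy
          _ < mval x := hk
          _ ≤ x i := mval_le x i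
      refine hfree D hD (fun B hB => ?_)
      obtain ⟨i, hi⟩ := htr B hB
      rw [Finset.mem_inter] at hi
      exact ⟨i, Finset.mem_inter.mpr ⟨hsub hi.1, hi.2⟩⟩
    have hMsub : ∀ i, i ∈ Mset x → y i = k := by
      intro i hi
      rw [mem_Mset] at hi
      have h1 := hle i
      have h2 := mval_le y i
      omega
    have hMnt : ¬ IsTransversal H (Mset x) := by
      intro ht
      obtain ⟨i, hi⟩ := ht D hD
      rw [Finset.mem_inter] at hi
      have h1 := hMsub i hi.1
      have h2 := (mem_Mset x i).mp hi.1
      have h3 := (hDmem i).mp hi.2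
      omega
    have hDsub : D ⊆ Finset.univ \ Mset x := by
      intro i hi
      rw [hDmem] at hi
      rw [Finset.mem_sdiff]
      refine ⟨Finset.mem_univ i, fun hm => ?_⟩
      have h1 := hMsub i hm
      have h2 := (mem_Mset x i).mp hm
      omega
    have hDHx : D ∈ Hofx H x := by
      rw [Hofx, subHyp, Finset.mem_filter]
      exact ⟨hD, hDsub⟩
    refine ⟨hmx, hMnt, D, hDHx, fun B hB => ?_⟩
    rw [Hofx, subHyp, Finset.mem_filter] at hB
    obtain ⟨i, hi⟩ := htr B hB.1
    rw [Finset.mem_inter, mem_Mset] at hi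
    have hix : i ∉ Mset x := fun hm => (Finset.mem_sdiff.mp (hB.2 hi.2)).2 hm
    refine ⟨i, Finset.mem_inter.mpr ⟨(hDmem i).mpr ?_, hi.2⟩⟩
    have h1 : y i = k := by rw [hi.1, hmy]
    have h2 : x i ≠ mval x := fun h => hix ((mem_Mset x i).mpr h)
    have h3 := mval_le x i
    omega
  · rintro ⟨hmx, hMnt, A, hA, hAtr⟩
    rw [Hofx, subHyp, Finset.mem_filter] at hA
    obtain ⟨hAH, hAsub⟩ := hA
    have hAne : A.Nonempty := Finset.nonempty_iff_ne_empty.mpr (fun h => hH (h ▸ hAH))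
    have hAgt : ∀ i ∈ A, k < x i := by
      intro i hi
      have hnm : i ∉ Mset x := (Finset.mem_sdiff.mp (hAsub hi)).2
      have h2 : x i ≠ mval x := fun h => hnm ((mem_Mset x i).mpr h)
      have h3 := mval_le x i
      omega
    set y : Fin n → ℕ := fun i => if i ∈ A then k else x i with hy
    have hyA : ∀ i ∈ A, y i = k := by intro i hi; simp [hy, hi]
    have hynA : ∀ i, i ∉ A → y i = x i := by intro i hi; simp [hy, hi]
    have hyle : ∀ i, y i ≤ x i := by
      intro i
      by_cases hi : i ∈ A
      · rw [hyA i hi]; exact le_of_lt (hAgt i hi)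
      · rw [hynA i hi]
    obtain ⟨i₀, hi₀⟩ := hAne
    have hyne : y ≠ x := by
      intro h
      have h1 := hAgt i₀ hi₀
      have h2 := hyA i₀ hi₀
      rw [h] at h2; omega
    have hfilt : (Finset.univ.filter fun i => y i < x i) = A := by
      ext i
      simp only [Finset.mem_filter, Finset.mem_univ, true_and]
      constructor
      · intro h
        by_contra hna
        rw [hynA i hna] at h; omega
      · intro h
        rw [hyA i h]; exact hAgt i h
    have hmy : mval y = k := by
      apply mval_eq
      · intro i
        by_cases hi : i ∈ A
        · rw [hyA i hi]
        · rw [hynA i hi]; have := mval_le x i; omega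
      · exact ⟨i₀, hyA i₀ hi₀⟩
    refine ⟨y, ⟨hyle, hyne, by rw [hfilt]; exact hAH⟩, hmy, fun B hB => ?_⟩
    by_cases hBM : ∃ i, i ∈ B ∧ i ∈ Mset x
    · obtain ⟨i, hiB, hiM⟩ := hBM
      have hiA : i ∉ A := fun h => (Finset.mem_sdiff.mp (hAsub h)).2 hiM
      have hx : x i = mval x := (mem_Mset x i).mp hiM
      refine ⟨i, Finset.mem_inter.mpr ⟨(mem_Mset y i).mpr ?_, hiB⟩⟩
      rw [hynA i hiA, hmy]; omega
    · push_neg at hBM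
      have hBHx : B ∈ Hofx H x := by
        rw [Hofx, subHyp, Finset.mem_filter]
        exact ⟨hB, fun i hi => Finset.mem_sdiff.mpr ⟨Finset.mem_univ i, hBM i hi⟩⟩
      obtain ⟨i, hi⟩ := hAtr B hBHx
      rw [Finset.mem_inter] at hi
      exact ⟨i, Finset.mem_inter.mpr ⟨(mem_Mset y i).mpr (by rw [hyA i hi.1, hmy]), hi.2⟩⟩
end

section
/- Let 𝓗 ⊆ 2^{[n]} \ {∅} be a minimally transversal-free (MTF) hypergraph. Then for every k ∈ ℤ_{≥0}, N(k) ∪ P(k) = { x ∈ ℤ_{≥0}^n : m(x) = k }. -/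
/-- For a minimally transversal-free hypergraph `H`,
`N(k) ∪ P(k) = { x : m(x) = k }`. -/
theorem hyp_nk_union_pk (n : ℕ) (hn : 0 < n)
    (H : Finset (Finset (Fin n))) (hH : ∅ ∉ H) (hMTF : MTF H)
    (k : ℕ) (x : Fin n → ℕ) :
    (NPos H k x ∨ PPos H k x) ↔ mval x = k := by
  have hne : Nonempty (Fin n) := ⟨⟨0, hn⟩⟩
  have hle : ∀ z : Fin n → ℕ, ∀ i, mval z ≤ z i := fun z i => Nat.sInf_le ⟨i, rfl⟩
  have hattain : ∀ z : Fin n → ℕ, ∃ i, z i = mval z := by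
    intro z
    have : mval z ∈ Set.range z := Nat.sInf_mem (Set.range_nonempty z)
    obtain ⟨i, hi⟩ := this; exact ⟨i, hi⟩
  constructor
  · rintro (⟨y, ⟨hy1, hy2, hy3⟩, hmy, htr⟩ | ⟨hm, _⟩)
    · -- N(k) case
      have hxk : ∀ i, k ≤ x i := fun i => hmy ▸ (hle y i).trans (hy1 i)
      have hkx : k ≤ mval x := le_csInf (Set.range_nonempty x) (by rintro _ ⟨i, rfl⟩; exact hxk i)
      rcases eq_or_lt_of_le hkx with h | h
      · exact h.symm
      · exfalso
        have hsub : Mset y ⊆ Finset.univ.filter fun i => y i < x i := by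
          intro i hi
          simp only [Mset, Finset.mem_filter, Finset.mem_univ, true_and] at hi ⊢
          calc y i = k := by rw [hi, hmy]
          _ < mval x := h
          _ ≤ x i := hle x i
        have : IsTransversal H (Finset.univ.filter fun i => y i < x i) := by
          intro B hB
          obtain ⟨j, hj⟩ := htr B hB
          exact ⟨j, Finset.mem_inter.mpr ⟨hsub (Finset.mem_inter.mp hj).1,
            (Finset.mem_inter.mp hj).2⟩⟩
        exact hMTF.1 _ hy3 this
    · exact hm
  · intro hm
    by_cases htr : IsTransversal H (Mset x)
    · exact Or.inr ⟨hm, htr⟩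
    · left
      -- some hyperedge misses Mset x
      simp only [IsTransversal, not_forall] at htr
      obtain ⟨B, hB, hBmiss⟩ := htr
      have hBsub : B ⊆ Finset.univ \ Mset x := by
        intro j hj
        simp only [Finset.mem_sdiff, Finset.mem_univ, true_and]
        intro hjM
        exact hBmiss ⟨j, Finset.mem_inter.mpr ⟨hjM, hj⟩⟩
      have hBne : B.Nonempty := Finset.nonempty_of_ne_empty (fun h => hH (h ▸ hB))
      obtain ⟨i0, hi0⟩ := hattain x
      have hi0M : i0 ∈ Mset x := by simp [Mset, hi0]
      have hSne : (Finset.univ \ Mset x).Nonempty := ⟨hBne.choose, hBsub hBne.choose_spec⟩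
      have hSneq : Finset.univ \ Mset x ≠ Finset.univ := by
        intro h
        have : i0 ∈ Finset.univ \ Mset x := by rw [h]; exact Finset.mem_univ i0
        exact (Finset.mem_sdiff.mp this).2 hi0M
      obtain ⟨A, hA, hAtr⟩ := hMTF.2 _ hSne hSneq
      rw [subHyp, Finset.mem_filter] at hA
      obtain ⟨hAH, hAS⟩ := hA
      have hAne : A.Nonempty := Finset.nonempty_of_ne_empty (fun h => hH (h ▸ hAH))
      have hAlt : ∀ i ∈ A, k < x i := by
        intro i hi
        have hiS := hAS hi
        simp only [Finset.mem_sdiff, Finset.mem_univ, true_and, Mset, Finset.mem_filter] at hiS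
        have : x i ≠ k := fun h => hiS (by simp [h, hm])
        exact lt_of_le_of_ne (hm ▸ hle x i) (Ne.symm this)
      set y : Fin n → ℕ := fun i => if i ∈ A then k else x i with hy
      have hy1 : ∀ i, y i ≤ x i := by
        intro i; simp only [hy]
        split
        · exact le_of_lt (hAlt i (by assumption))
        · exact le_rfl
      have hfilt : (Finset.univ.filter fun i => y i < x i) = A := by
        ext i
        simp only [Finset.mem_filter, Finset.mem_univ, true_and, hy]
        constructor
        · intro h; by_contra hiA; simp [hiA] at h
        · intro h; simp [h]; exact hAlt i h
      have hyk : ∀ i ∈ A, y i = k := fun i hi => by simp [hy, hi]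
      have hmyk : mval y = k := by
        apply le_antisymm
        · exact Nat.sInf_le ⟨hAne.choose, hyk _ hAne.choose_spec⟩
        · apply le_csInf (Set.range_nonempty y)
          rintro _ ⟨i, rfl⟩
          simp only [hy]
          split
          · exact le_rfl
          · exact hm ▸ hle x i
      have hyne : y ≠ x := by
        intro h
        have := hAlt _ hAne.choose_spec
        rw [← h] at this
        rw [hyk _ hAne.choose_spec] at this
        exact lt_irrefl k this
      refine ⟨y, ⟨hy1, hyne, hfilt ▸ hAH⟩, hmyk, ?_⟩
      intro B' hB'
      by_cases hB'M : (Mset x ∩ B').Nonempty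
      · obtain ⟨j, hj⟩ := hB'M
        rw [Finset.mem_inter] at hj
        have hjA : j ∉ A := by
          intro hjA
          have := hAS hjA
          exact (Finset.mem_sdiff.mp this).2 hj.1
        have hyj : y j = k := by
          simp only [hy, if_neg hjA]
          have := (Finset.mem_filter.mp hj.1).2
          rw [this, hm]
        refine ⟨j, Finset.mem_inter.mpr ⟨?_, hj.2⟩⟩
        simp [Mset, hyj, hmyk]
      · have hB'S : B' ∈ subHyp H (Finset.univ \ Mset x) := by
          rw [subHyp, Finset.mem_filter]
          refine ⟨hB', fun j hj => ?_⟩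
          simp only [Finset.mem_sdiff, Finset.mem_univ, true_and]
          intro hjM
          exact hB'M ⟨j, Finset.mem_inter.mpr ⟨hjM, hj⟩⟩
        obtain ⟨j, hj⟩ := hAtr B' hB'S
        rw [Finset.mem_inter] at hj
        refine ⟨j, Finset.mem_inter.mpr ⟨?_, hj.2⟩⟩
        simp [Mset, hyk j hj.1, hmyk]
end

section
/- In an SG-decreasing impartial game, the Smith remoteness function satisfies R(x) = 0 if x is a terminal position and R(x) = 1 if x is non-terminal. -/
/-- `G` is the Sprague–Grundy function of the game with move relation `mv`:
it is characterized by the properties that no move preserves the SG value, and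
every value below `G x` is attained by some move from `x`. -/
def IsSGFunction {α : Type*} (mv : α → α → Prop) (G : α → ℕ) : Prop :=
  (∀ x y, mv x y → G y ≠ G x) ∧ (∀ x m, m < G x → ∃ y, mv x y ∧ G y = m)

/-- In an SG-decreasing impartial game (every move strictly decreases the
Sprague–Grundy value), the Smith remoteness function is `0` on terminal
positions and `1` on all non-terminal positions. -/
theorem sg_decreasing_remoteness {α : Type*} (mv : α → α → Prop)
    (G : α → ℕ) (hG : IsSGFunction mv G)
    (hdec : ∀ x y, mv x y → G y < G x)
    (R : α → ℕ) (hR : IsRemoteness mv R) (x : α) :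
    ((∀ y, ¬ mv x y) → R x = 0) ∧ ((∃ y, mv x y) → R x = 1) := by
  refine ⟨(hR x).1, ?_⟩
  rintro ⟨y, hy⟩
  -- G x > 0, so there is a move to a position with G = 0
  have hGx : 0 < G x := lt_of_le_of_lt (Nat.zero_le _) (hdec x y hy)
  obtain ⟨z, hz, hGz⟩ := hG.2 x 0 hGx
  -- z is terminal
  have hzt : ∀ w, ¬ mv z w := fun w hw => by
    have := hdec z w hw; omega
  have hRz : R z = 0 := (hR z).1 hzt
  have hex : ∃ y, mv x y ∧ Even (R y) := ⟨z, hz, by simp [hRz]⟩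
  obtain ⟨w, hw, hew, hRx, hmin⟩ := (hR x).2.1 hex
  have : R w ≤ R z := hmin z hz (by simp [hRz])
  omega
end

section
/- Let (x,y) be a position of the game Euclid with x > y ≥ 1, gcd(x,y) = 1, and suppose (x,y) is an N-position. If (x,y) → (x', y) is a move to a P-position (so x' = x − my for some positive integer m, with y/φ < x' < φy), then x'/x ≤ φ − 1. -/
/-- A move of the game Euclid: from a pair of distinct positive integers,
subtract a positive multiple of the smaller coordinate from the larger one,
keeping it positive. -/
def EuclidMove (p q : ℕ × ℕ) : Prop :=
  (p.2 < p.1 ∧ 0 < p.2 ∧ ∃ l : ℕ, 1 ≤ l ∧ 0 < q.1 ∧ q.1 + l * p.2 = p.1 ∧ q.2 = p.2) ∨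
  (p.1 < p.2 ∧ 0 < p.1 ∧ ∃ l : ℕ, 1 ≤ l ∧ 0 < q.2 ∧ q.2 + l * p.1 = p.2 ∧ q.1 = p.1)

/-- The golden ratio `φ = (1 + √5)/2`. -/
noncomputable def phi : ℝ := (1 + Real.sqrt 5) / 2

/-- From an N-position `(x,y)` of Euclid with `x > y ≥ 1`, `gcd(x,y) = 1`,
a move `(x,y) → (x',y)` to a P-position satisfies `x'/x ≤ φ - 1`. -/
theorem euclid_nposition_move (x y x' : ℕ) (hy : 1 ≤ y) (hxy : y < x)
    (hgcd : Nat.gcd x y = 1)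
    (hN : ¬ ((x : ℝ) < phi * y ∧ (y : ℝ) < phi * x))
    (hmv : EuclidMove (x, y) (x', y))
    (hP : (x' : ℝ) < phi * y ∧ (y : ℝ) < phi * x') :
    (x' : ℝ) / (x : ℝ) ≤ phi - 1 := by
  have h5 : Real.sqrt 5 ^ 2 = 5 := Real.sq_sqrt (by norm_num)
  have h5n : (0:ℝ) ≤ Real.sqrt 5 := Real.sqrt_nonneg 5
  have hphi2 : phi ^ 2 = phi + 1 := by unfold phi; nlinarith
  have hphi1 : 1 < phi := by unfold phi; nlinarith
  rcases hmv with ⟨-, -, l, hl, hx'pos, heq, -⟩ | ⟨h, -⟩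
  · simp only at heq hl hx'pos
    have hnat : x' + y ≤ x := by nlinarith
    have hxy' : (x':ℝ) + y ≤ x := by exact_mod_cast hnat
    have hxpos : (0:ℝ) < x := by exact_mod_cast (show 0 < x by omega)
    have hx'p : (0:ℝ) < x' := by exact_mod_cast hx'pos
    rw [div_le_iff₀ hxpos]
    nlinarith [hP.1, hP.2]
  · simp only at h; omega
end

section
/- Let x, y be positive integers with gcd(x,y) = 1 and let R denote the Smith remoteness function of the game Euclid. Then R(x,y) = 2 if and only if x > 1, y > 1, and |x − y| = 1. -/
namespace EuclidAux

lemma no_move_terminal (a : ℕ) (q : ℕ × ℕ) : ¬ EuclidMove (a, a) q := by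
  rintro (⟨h, -⟩ | ⟨h, -⟩) <;> exact lt_irrefl a h

lemma move_swap {p q : ℕ × ℕ} (h : EuclidMove p q) : EuclidMove p.swap q.swap := by
  rcases h with ⟨h1, h2, l, hl⟩ | ⟨h1, h2, l, hl⟩
  · exact Or.inr ⟨h1, h2, l, hl⟩
  · exact Or.inl ⟨h1, h2, l, hl⟩

lemma move_pos {p q : ℕ × ℕ} (h : EuclidMove p q) : 0 < q.1 ∧ 0 < q.2 := by
  rcases h with ⟨h1, h2, l, hl, hq, hadd, he⟩ | ⟨h1, h2, l, hl, hq, hadd, he⟩ <;> omega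

lemma exists_move {p : ℕ × ℕ} (h1 : 0 < p.1) (h2 : 0 < p.2) (hne : p.1 ≠ p.2) :
    ∃ q, EuclidMove p q := by
  rcases lt_or_gt_of_ne hne with h | h
  · exact ⟨(p.1, p.2 - p.1), Or.inr ⟨h, h1, 1, le_refl 1,
      show 0 < p.2 - p.1 by omega, show p.2 - p.1 + 1 * p.1 = p.2 by omega, rfl⟩⟩
  · exact ⟨(p.1 - p.2, p.2), Or.inl ⟨h, h2, 1, le_refl 1,
      show 0 < p.1 - p.2 by omega, show p.1 - p.2 + 1 * p.2 = p.1 by omega, rfl⟩⟩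

variable (R : ℕ × ℕ → ℕ) (hR : IsRemoteness EuclidMove R)

include hR

lemma R_terminal (a : ℕ) : R (a, a) = 0 :=
  (hR (a, a)).1 (no_move_terminal a)

lemma eq_of_R_zero {q : ℕ × ℕ} (h : R q = 0) (h1 : 0 < q.1) (h2 : 0 < q.2) :
    q.1 = q.2 := by
  by_contra hne
  by_cases hev : ∃ w, EuclidMove q w ∧ Even (R w)
  · obtain ⟨w, -, -, heq, -⟩ := (hR q).2.1 hev
    omega
  · obtain ⟨w, -, heq, -⟩ := (hR q).2.2 (exists_move h1 h2 hne)
      (fun z hz hez => hev ⟨z, hz, hez⟩)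
    omega

lemma R_one_left {b : ℕ} (hb : 1 < b) : R (1, b) = 1 := by
  have hmv : EuclidMove (1, b) (1, 1) :=
    Or.inr ⟨hb, one_pos, b - 1, by omega, one_pos, show 1 + (b - 1) * 1 = b by omega, rfl⟩
  have h0 : R (1, 1) = 0 := R_terminal R hR 1
  obtain ⟨w, hw, hev, heq, hmin⟩ := (hR (1, b)).2.1 ⟨(1, 1), hmv, by rw [h0]; exact Even.zero⟩
  have := hmin (1, 1) hmv (by rw [h0]; exact Even.zero)
  omega

lemma dvd_of_R_one {a b : ℕ} (ha : 0 < a) (hb : 0 < b) (h1 : R (a, b) = 1) :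
    a ∣ b ∨ b ∣ a := by
  by_cases hev : ∃ w, EuclidMove (a, b) w ∧ Even (R w)
  · obtain ⟨w, hw, hevw, heq, -⟩ := (hR (a, b)).2.1 hev
    have hRw : R w = 0 := by omega
    have hpos := move_pos hw
    have hterm : w.1 = w.2 := eq_of_R_zero R hR hRw hpos.1 hpos.2
    rcases hw with ⟨hlt, hp, l, hl, hq1, hadd, hq2⟩ | ⟨hlt, hp, l, hl, hq2, hadd, hq1⟩
    · right
      have hadd' : w.1 + l * b = a := hadd
      have hq2' : w.2 = b := hq2
      have : b ∣ w.1 + l * b := by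
        rw [hterm, hq2']; exact dvd_add dvd_rfl (dvd_mul_left b l)
      rwa [hadd'] at this
    · left
      have hadd' : w.2 + l * a = b := hadd
      have hq1' : w.1 = a := hq1
      have : a ∣ w.2 + l * a := by
        rw [← hterm, hq1']; exact dvd_add dvd_rfl (dvd_mul_left a l)
      rwa [hadd'] at this
  · have hne : a ≠ b := by
      intro h; subst h; have := R_terminal R hR a; omega
    obtain ⟨w, hw, heq, -⟩ := (hR (a, b)).2.2 (exists_move ha hb hne)
      (fun z hz hez => hev ⟨z, hz, hez⟩)
    have hRw : R w = 0 := by omega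
    exact absurd ⟨w, hw, hRw ▸ Even.zero⟩ hev

lemma fwd {x y : ℕ} (hy : 0 < y) (hxy : y < x) (hgcd : Nat.gcd x y = 1)
    (hall : ∀ z, EuclidMove (x, y) z → R z = 1) : 1 < y ∧ x = y + 1 := by
  have hy2 : 1 < y := by
    by_contra h
    have hy1 : y = 1 := by omega
    subst hy1
    have hmv : EuclidMove (x, 1) (1, 1) :=
      Or.inl ⟨hxy, one_pos, x - 1, by omega, one_pos, show 1 + (x - 1) * 1 = x by omega, rfl⟩
    have := hall (1, 1) hmv
    have h0 := R_terminal R hR 1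
    omega
  have hgr : Nat.gcd (x % y) y = 1 := by
    rw [← Nat.gcd_rec]; rwa [Nat.gcd_comm]
  have hr0 : x % y ≠ 0 := by
    intro h; rw [h, Nat.gcd_zero_left] at hgr; omega
  have hrlt : x % y < y := Nat.mod_lt x (by omega)
  have hdiv : 0 < x / y := Nat.div_pos hxy.le (by omega)
  have hm1 : EuclidMove (x, y) (x % y, y) :=
    Or.inl ⟨hxy, hy, x / y, hdiv, Nat.pos_of_ne_zero hr0, Nat.mod_add_div' x y, rfl⟩
  have hr1 : x % y = 1 := by
    rcases dvd_of_R_one R hR (Nat.pos_of_ne_zero hr0) hy (hall _ hm1) with h | h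
    · have hd : x % y ∣ Nat.gcd (x % y) y := Nat.dvd_gcd dvd_rfl h
      rw [hgr] at hd
      exact Nat.dvd_one.mp hd
    · exact absurd (Nat.le_of_dvd (Nat.pos_of_ne_zero hr0) h) (by omega)
  have hx : 1 + x / y * y = x := by
    have := Nat.mod_add_div' x y
    omega
  rcases Nat.lt_or_ge (x / y) 2 with h | h
  · refine ⟨hy2, ?_⟩
    have hq1 : x / y = 1 := by omega
    rw [hq1, one_mul] at hx
    omega
  · exfalso
    have h2y : 2 * y ≤ x / y * y := Nat.mul_le_mul_right y h
    have hsub : (x / y - 1) * y = x / y * y - y := by rw [Nat.sub_mul, one_mul]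
    have hm2 : EuclidMove (x, y) (y + 1, y) :=
      Or.inl ⟨hxy, hy, x / y - 1, by omega, by omega,
        show y + 1 + (x / y - 1) * y = x by omega, rfl⟩
    rcases dvd_of_R_one R hR (show 0 < y + 1 by omega) hy (hall _ hm2) with h' | h'
    · exact absurd (Nat.le_of_dvd hy h') (by omega)
    · have hd1 : y ∣ 1 := by
        have := Nat.dvd_sub h' (dvd_refl y)
        simpa using this
      have := Nat.dvd_one.mp hd1
      omega

lemma IsRem_swap : IsRemoteness EuclidMove (fun p => R p.swap) := by
  intro p
  refine ⟨?_, ?_, ?_⟩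
  · intro h
    exact (hR p.swap).1 (fun q hq => h q.swap (by simpa using move_swap hq))
  · rintro ⟨q, hq, he⟩
    obtain ⟨w, hw, hev, heq, hmin⟩ := (hR p.swap).2.1 ⟨q.swap, move_swap hq, by simpa using he⟩
    refine ⟨w.swap, by simpa using move_swap hw, by simpa using hev, by simpa using heq, ?_⟩
    intro z hz hze
    simpa using hmin z.swap (move_swap hz) (by simpa using hze)
  · rintro ⟨q, hq⟩ hodd
    obtain ⟨w, hw, heq, hmax⟩ := (hR p.swap).2.2 ⟨q.swap, move_swap hq⟩
      (fun z hz => by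
        have := hodd z.swap (by simpa using move_swap hz)
        simpa using this)
    exact ⟨w.swap, by simpa using move_swap hw, by simpa using heq,
      fun z hz => by simpa using hmax z.swap (move_swap hz)⟩

lemma rev {y : ℕ} (hy : 1 < y) : R (y + 1, y) = 2 := by
  have h1 : R (1, y) = 1 := R_one_left R hR hy
  have hmv : EuclidMove (y + 1, y) (1, y) :=
    Or.inl ⟨show y < y + 1 by omega, show 0 < y by omega, 1, le_refl 1, one_pos,
      show 1 + 1 * y = y + 1 by omega, rfl⟩
  have huniq : ∀ z, EuclidMove (y + 1, y) z → z = (1, y) := by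
    rintro ⟨z1, z2⟩ (⟨hlt, hpos, l, hl, hz1, hadd, hz2⟩ | ⟨hlt, -⟩)
    · have hadd' : z1 + l * y = y + 1 := hadd
      have hz2' : z2 = y := hz2
      have hz1' : 0 < z1 := hz1
      rcases Nat.lt_or_ge l 2 with h | h
      · have hl1 : l = 1 := by omega
        rw [hl1, one_mul] at hadd'
        simp only [Prod.mk.injEq]
        omega
      · have := Nat.mul_le_mul_right y h
        omega
    · have hlt' : y + 1 < y := hlt
      omega
  obtain ⟨w, hw, heq, -⟩ := (hR (y + 1, y)).2.2 ⟨(1, y), hmv⟩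
    (fun z hz => by rw [huniq z hz, h1]; decide)
  rw [huniq w hw, h1] at heq
  omega

end EuclidAux

open EuclidAux in
/-- For coprime positive `x, y`: the Smith remoteness of the game Euclid
satisfies `R(x,y) = 2` iff `x > 1`, `y > 1` and `|x - y| = 1`. -/
theorem euclid_remoteness_two (x y : ℕ) (hx : 0 < x) (hy : 0 < y)
    (hgcd : Nat.gcd x y = 1)
    (R : ℕ × ℕ → ℕ) (hR : IsRemoteness EuclidMove R) :
    R (x, y) = 2 ↔ 1 < x ∧ 1 < y ∧ ((x : ℤ) - (y : ℤ)).natAbs = 1 := by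
  constructor
  · intro h2
    have hne : x ≠ y := by
      intro h; subst h; have := R_terminal R hR x; omega
    have hev : ¬ ∃ w, EuclidMove (x, y) w ∧ Even (R w) := by
      intro hw
      obtain ⟨w, -, hevw, heq, -⟩ := (hR (x, y)).2.1 hw
      rw [Nat.even_iff] at hevw
      omega
    obtain ⟨w, hw, heq, hmax⟩ := (hR (x, y)).2.2 (exists_move hx hy hne)
      (fun z hz hez => hev ⟨z, hz, hez⟩)
    have hall : ∀ z, EuclidMove (x, y) z → R z = 1 := by
      intro z hz
      have h1 := hmax z hz
      have h2' : ¬ Even (R z) := fun hez => hev ⟨z, hz, hez⟩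
      rw [Nat.even_iff] at h2'
      omega
    rcases lt_or_gt_of_ne hne with hlt | hgt
    · have hall' : ∀ z, EuclidMove (y, x) z → (fun p => R p.swap) z = 1 := by
        intro z hz
        have hm : EuclidMove (x, y) z.swap := by simpa using move_swap hz
        simpa using hall _ hm
      obtain ⟨h1, h2⟩ := fwd (fun p => R p.swap) (IsRem_swap R hR) hx hlt
        (by rwa [Nat.gcd_comm]) hall'
      refine ⟨by omega, by omega, by omega⟩
    · obtain ⟨h1, h2⟩ := fwd R hR hy hgt hgcd hall
      refine ⟨by omega, by omega, by omega⟩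
  · rintro ⟨hx1, hy1, habs⟩
    have hc : x = y + 1 ∨ y = x + 1 := by omega
    rcases hc with h | h
    · subst h
      exact rev R hR hy1
    · have := rev (fun p => R p.swap) (IsRem_swap R hR) hx1
      rw [h]
      simpa using this
end

section
/- Let x, y be positive integers with gcd(x,y) = 1, x > 1, y > 1, and |x − y| ≥ 2, and let R denote the Smith remoteness function of the game Euclid. Then R(x,y) = 3 if and only if x = my ± 1 or y = mx ± 1 for some integer m ≥ 2 (equivalently, x ≡ ±1 (mod y) or y ≡ ±1 (mod x)). -/
/-!
An odd remoteness is always reached through a move to a position of remoteness one less, and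
from a position of even remoteness every move leads to a smaller, odd remoteness. Moves of
Euclid preserve the gcd, so among coprime positions remoteness `1` occurs only at `(a, 1)` and
`(1, b)`, and remoteness `2` only at pairs of consecutive integers `(b + 1, b)`, `(b, b + 1)` with
`b ≥ 2`. Hence for coprime `x > y + 1 > 2` we have `R (x, y) = 3` exactly when some move
`x ↦ x - l y` lands on `y ± 1`. Swapping the coordinates reduces the theorem to this case.
-/

namespace IsRemoteness

variable {α : Type*} {mv : α → α → Prop} {R : α → ℕ} {x y : α}

theorem exists_move_eq_succ (hR : IsRemoteness mv R) (hxy : mv x y) :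
    ∃ z, mv x z ∧ R x = R z + 1 := by
  obtain ⟨-, heven, hodd⟩ := hR x
  by_cases h : ∃ z, mv x z ∧ Even (R z)
  · obtain ⟨z, hz, -, hRz, -⟩ := heven h
    exact ⟨z, hz, hRz⟩
  · push Not at h
    obtain ⟨z, hz, hRz, -⟩ := hodd ⟨y, hxy⟩ h
    exact ⟨z, hz, hRz⟩

theorem eq_succ_of_forall_move_eq (hR : IsRemoteness mv R) (hxy : mv x y)
    (h : ∀ z, mv x z → z = y) : R x = R y + 1 := by
  obtain ⟨z, hz, hRz⟩ := exists_move_eq_succ hR hxy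
  rwa [← h z hz]

theorem eq_succ_of_even_of_le (hR : IsRemoteness mv R) (hxy : mv x y) (hy : Even (R y))
    (hmin : ∀ z, mv x z → Even (R z) → R y ≤ R z) : R x = R y + 1 := by
  obtain ⟨z, hz, hzeven, hRz, hzmin⟩ := (hR x).2.1 ⟨y, hxy, hy⟩
  have := hmin z hz hzeven
  have := hzmin y hxy hy
  omega

theorem exists_move_eq_succ_of_odd (hR : IsRemoteness mv R) (hx : Odd (R x)) :
    ∃ y, mv x y ∧ R x = R y + 1 := by
  obtain ⟨hterm, heven, hodd⟩ := hR x
  by_cases hmove : ∃ y, mv x y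
  · by_cases h : ∃ y, mv x y ∧ Even (R y)
    · obtain ⟨y, hy, -, hRy, -⟩ := heven h
      exact ⟨y, hy, hRy⟩
    · push Not at h
      obtain ⟨y, hy, hRy, -⟩ := hodd hmove h
      have hRx : Even (R x) := hRy ▸ (Nat.not_even_iff_odd.mp (h y hy)).add_one
      exact absurd hRx (Nat.not_even_iff_odd.mpr hx)
  · push Not at hmove
    exact absurd (hterm hmove ▸ hx) Nat.not_odd_zero

theorem odd_and_lt_of_even (hR : IsRemoteness mv R) (hx : Even (R x)) (hxy : mv x y) :
    Odd (R y) ∧ R y < R x := by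
  obtain ⟨-, heven, hodd⟩ := hR x
  have hall : ∀ z, mv x z → ¬ Even (R z) := by
    intro z hz hz'
    obtain ⟨w, -, hweven, hRw, -⟩ := heven ⟨z, hz, hz'⟩
    exact Nat.not_even_iff_odd.mpr (hRw ▸ hweven.add_one) hx
  obtain ⟨z, -, hRz, hzmax⟩ := hodd ⟨y, hxy⟩ hall
  exact ⟨Nat.not_even_iff_odd.mp (hall y hxy), by have := hzmax y hxy; omega⟩

theorem comp_involutive (hR : IsRemoteness mv R) {σ : α → α} (hσ : Function.Involutive σ)
    (hmv : ∀ p q, mv p q → mv (σ p) (σ q)) : IsRemoteness mv (R ∘ σ) := by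
  have hmv' : ∀ p q, mv (σ p) q ↔ mv p (σ q) := fun p q =>
    ⟨fun h => hσ p ▸ hmv _ _ h, fun h => hσ q ▸ hmv _ _ h⟩
  intro x
  obtain ⟨hterm, heven, hodd⟩ := hR (σ x)
  refine ⟨fun h => hterm fun q hq => h (σ q) ((hmv' x q).mp hq), ?_, ?_⟩
  · rintro ⟨y, hy, hyeven⟩
    obtain ⟨z, hz, hzeven, hRz, hzmin⟩ := heven ⟨σ y, hmv _ _ hy, hyeven⟩
    refine ⟨σ z, (hmv' x z).mp hz, ?_, ?_, fun w hw hweven => ?_⟩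
    · simpa only [Function.comp_apply, hσ z]
    · simpa only [Function.comp_apply, hσ z]
    · simpa only [Function.comp_apply, hσ z] using hzmin (σ w) (hmv _ _ hw) hweven
  · rintro ⟨y, hy⟩ hall
    obtain ⟨z, hz, hRz, hzmax⟩ :=
      hodd ⟨σ y, hmv _ _ hy⟩ fun w hw => hσ w ▸ hall (σ w) ((hmv' x w).mp hw)
    refine ⟨σ z, (hmv' x z).mp hz, ?_, fun w hw => ?_⟩
    · simpa only [Function.comp_apply, hσ z]
    · simpa only [Function.comp_apply, hσ z] using hzmax (σ w) (hmv _ _ hw)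

end IsRemoteness

namespace EuclidMove

variable {p q : ℕ × ℕ}

theorem swap (h : EuclidMove p q) : EuclidMove p.swap q.swap :=
  h.symm

theorem pos (h : EuclidMove p q) : 0 < q.1 ∧ 0 < q.2 := by
  rcases h with ⟨-, hp, -, -, hq, -, h2⟩ | ⟨-, hp, -, -, hq, -, h1⟩ <;> omega

theorem fst_eq_or_snd_eq (h : EuclidMove p q) : q.1 = p.1 ∨ q.2 = p.2 := by
  rcases h with ⟨-, -, -, -, -, -, h2⟩ | ⟨-, -, -, -, -, -, h1⟩
  exacts [Or.inr h2, Or.inl h1]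

theorem gcd_eq (h : EuclidMove p q) : Nat.gcd q.1 q.2 = Nat.gcd p.1 p.2 := by
  obtain ⟨a, b⟩ := p
  obtain ⟨c, d⟩ := q
  rcases h with ⟨-, -, l, -, -, hc, rfl⟩ | ⟨-, -, l, -, -, hd, rfl⟩
  · simp only at hc ⊢
    rw [← hc, Nat.gcd_add_mul_right_left]
  · simp only at hd ⊢
    rw [← hd, Nat.gcd_add_mul_right_right]

theorem exists_add_mul_of_snd_lt (h : EuclidMove p q) (hlt : p.2 < p.1) :
    ∃ l, 1 ≤ l ∧ q.1 + l * p.2 = p.1 ∧ q.2 = p.2 := by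
  rcases h with ⟨-, -, l, hl, -, h1, h2⟩ | ⟨hlt', -⟩
  exacts [⟨l, hl, h1, h2⟩, absurd hlt' hlt.not_gt]

end EuclidMove

theorem euclidMove_add_mul {b c l : ℕ} (hc : 0 < c) (hb : 0 < b) (hl : 1 ≤ l) :
    EuclidMove (c + l * b, b) (c, b) :=
  Or.inl ⟨by nlinarith, hb, l, hl, hc, rfl, rfl⟩

theorem euclidMove_one {a : ℕ} (ha : 1 < a) : EuclidMove (a, 1) (1, 1) :=
  Or.inl ⟨ha, one_pos, a - 1, by omega, one_pos, by simp only [mul_one]; omega, rfl⟩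

theorem exists_euclidMove {a b : ℕ} (ha : 0 < a) (hb : 0 < b) (hab : a ≠ b) :
    ∃ q, EuclidMove (a, b) q := by
  rcases lt_or_gt_of_ne hab with h | h
  · exact ⟨(a, b - a), Or.inr ⟨h, ha, 1, le_rfl, by omega, by omega, rfl⟩⟩
  · exact ⟨(a - b, b), Or.inl ⟨h, hb, 1, le_rfl, by omega, by omega, rfl⟩⟩

namespace IsRemoteness

variable {R : ℕ × ℕ → ℕ} {a b : ℕ}

theorem euclid_swap (hR : IsRemoteness EuclidMove R) : IsRemoteness EuclidMove (R ∘ Prod.swap) :=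
  comp_involutive hR Prod.swap_swap fun _ _ => EuclidMove.swap

theorem euclid_diag (hR : IsRemoteness EuclidMove R) (a : ℕ) : R (a, a) = 0 :=
  (hR (a, a)).1 fun _ h => by rcases h with ⟨h, -⟩ | ⟨h, -⟩ <;> exact lt_irrefl a h

theorem euclid_pos (hR : IsRemoteness EuclidMove R) (ha : 0 < a) (hb : 0 < b) (hab : a ≠ b) :
    0 < R (a, b) := by
  obtain ⟨q, hq⟩ := exists_euclidMove ha hb hab
  obtain ⟨z, -, hRz⟩ := exists_move_eq_succ hR hq
  omega

theorem euclid_eq_one_or_eq_one_of_move_eq_zero (hR : IsRemoteness EuclidMove R)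
    (hab : Nat.gcd a b = 1) {q : ℕ × ℕ} (hq : EuclidMove (a, b) q) (h0 : R q = 0) :
    a = 1 ∨ b = 1 := by
  have hdiag : q.1 = q.2 := by
    by_contra hne
    exact (euclid_pos hR (EuclidMove.pos hq).1 (EuclidMove.pos hq).2 hne).ne' h0
  have hgcd := EuclidMove.gcd_eq hq
  rw [hdiag, Nat.gcd_self, hab] at hgcd
  rcases EuclidMove.fst_eq_or_snd_eq hq with h | h
  · exact Or.inl (h.symm.trans (hdiag.trans hgcd))
  · exact Or.inr (h.symm.trans hgcd)

theorem euclid_eq_one_or_eq_one (hR : IsRemoteness EuclidMove R) (hab : Nat.gcd a b = 1)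
    (h1 : R (a, b) = 1) : a = 1 ∨ b = 1 := by
  obtain ⟨q, hq, hRq⟩ := exists_move_eq_succ_of_odd hR (h1 ▸ odd_one)
  exact euclid_eq_one_or_eq_one_of_move_eq_zero hR hab hq (by omega)

theorem euclid_one_right (hR : IsRemoteness EuclidMove R) (ha : 1 < a) : R (a, 1) = 1 := by
  have h0 := euclid_diag hR 1
  refine (eq_succ_of_even_of_le hR (euclidMove_one ha) (h0 ▸ Even.zero) ?_).trans (by rw [h0])
  intro z _ _
  omega

theorem euclid_one_left (hR : IsRemoteness EuclidMove R) (hb : 1 < b) : R (1, b) = 1 :=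
  euclid_one_right (euclid_swap hR) hb

theorem euclid_succ_self (hR : IsRemoteness EuclidMove R) (hb : 2 ≤ b) : R (b + 1, b) = 2 := by
  have hmove : EuclidMove (b + 1, b) (1, b) :=
    Or.inl ⟨by simp, by simp only; omega, 1, le_rfl, one_pos, by simp only; omega, rfl⟩
  have huniq : ∀ q, EuclidMove (b + 1, b) q → q = (1, b) := by
    intro q hq
    obtain ⟨l, hl, hq1, hq2⟩ := EuclidMove.exists_add_mul_of_snd_lt hq (by simp)
    have hpos := (EuclidMove.pos hq).1
    have : l * b < 2 * b := by simp only at hq1; omega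
    have hl1 : l = 1 := by nlinarith
    subst hl1
    exact Prod.ext (by simp only at hq1 ⊢; omega) hq2
  rw [eq_succ_of_forall_move_eq hR hmove huniq, euclid_one_left hR (by omega)]

theorem euclid_self_succ (hR : IsRemoteness EuclidMove R) (hb : 2 ≤ b) : R (b, b + 1) = 2 :=
  euclid_succ_self (euclid_swap hR) hb

theorem euclid_eq_succ_of_eq_two_of_lt (hR : IsRemoteness EuclidMove R) (hlt : b < a)
    (hab : Nat.gcd a b = 1) (h2 : R (a, b) = 2) : a = b + 1 := by
  rcases Nat.eq_zero_or_pos b with rfl | hb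
  · simpa using hab
  have heven : Even (R (a, b)) := h2 ▸ even_two
  have hmove : EuclidMove (a, b) (a - b, b) := by
    simpa [Nat.sub_add_cancel hlt.le] using euclidMove_add_mul (by omega : 0 < a - b) hb le_rfl
  obtain ⟨hodd, hlt2⟩ := odd_and_lt_of_even hR heven hmove
  have h1 : R (a - b, b) = 1 := by
    obtain ⟨k, hk⟩ := hodd
    omega
  have hgcd : Nat.gcd (a - b) b = 1 := (EuclidMove.gcd_eq hmove).trans hab
  rcases euclid_eq_one_or_eq_one hR hgcd h1 with h | rfl
  · omega
  · have := (odd_and_lt_of_even hR heven (euclidMove_one hlt)).1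
    rw [euclid_diag hR] at this
    exact absurd this Nat.not_odd_zero

theorem euclid_consecutive_of_eq_two (hR : IsRemoteness EuclidMove R) (hab : Nat.gcd a b = 1)
    (h2 : R (a, b) = 2) : a = b + 1 ∨ b = a + 1 := by
  rcases lt_trichotomy a b with h | rfl | h
  · exact Or.inr (euclid_eq_succ_of_eq_two_of_lt (euclid_swap hR) h (Nat.gcd_comm a b ▸ hab) h2)
  · simp [euclid_diag hR] at h2
  · exact Or.inl (euclid_eq_succ_of_eq_two_of_lt hR h hab h2)

theorem euclid_eq_three_of_move_eq_two (hR : IsRemoteness EuclidMove R) (ha : 1 < a) (hb : 1 < b)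
    (hab : Nat.gcd a b = 1) {q : ℕ × ℕ} (hq : EuclidMove (a, b) q) (h2 : R q = 2) :
    R (a, b) = 3 := by
  refine (eq_succ_of_even_of_le hR hq (h2 ▸ even_two) fun z hz hzeven => ?_).trans (by rw [h2])
  have hz0 : R z ≠ 0 := fun h0 => by
    rcases euclid_eq_one_or_eq_one_of_move_eq_zero hR hab hz h0 with h | h <;> omega
  obtain ⟨j, hj⟩ := hzeven
  omega

theorem euclid_eq_three_iff {x y : ℕ} (hR : IsRemoteness EuclidMove R) (hy : 1 < y)
    (hxy : y + 2 ≤ x) (hgcd : Nat.gcd x y = 1) :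
    R (x, y) = 3 ↔ ∃ m : ℕ, 2 ≤ m ∧ (x = m * y + 1 ∨ x + 1 = m * y) := by
  constructor
  · intro h3
    obtain ⟨⟨c, d⟩, hq, hRq⟩ := exists_move_eq_succ_of_odd hR (by rw [h3]; decide)
    obtain ⟨l, hl, hq1, hq2⟩ := EuclidMove.exists_add_mul_of_snd_lt hq (show y < x by omega)
    simp only at hq1 hq2
    subst d
    have hgcd' : Nat.gcd c y = 1 := (EuclidMove.gcd_eq hq).trans hgcd
    have hsucc : (l + 1) * y = l * y + y := by ring
    refine ⟨l + 1, by omega, ?_⟩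
    rcases euclid_consecutive_of_eq_two hR hgcd' (by omega) with h | h <;> omega
  · rintro ⟨m, hm, hform⟩
    obtain ⟨k, rfl⟩ : ∃ k, m = k + 2 := ⟨m - 2, by omega⟩
    have hsucc : (k + 2) * y = (k + 1) * y + y := by ring
    obtain ⟨c, l, hc, hl, rfl, hRc⟩ :
        ∃ c l, 0 < c ∧ 1 ≤ l ∧ c + l * y = x ∧ R (c, y) = 2 := by
      rcases hform with h | h
      · exact ⟨y + 1, k + 1, by omega, by omega, by omega, euclid_succ_self hR (by omega)⟩
      rcases Nat.lt_or_ge y 3 with hy3 | hy3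
      · obtain rfl : y = 2 := by omega
        exact ⟨3, k, by omega, by omega, by omega, euclid_succ_self hR le_rfl⟩
      · refine ⟨y - 1, k + 1, by omega, by omega, by omega, ?_⟩
        have := euclid_self_succ hR (by omega : 2 ≤ y - 1)
        rwa [Nat.sub_add_cancel (by omega : 1 ≤ y)] at this
    exact euclid_eq_three_of_move_eq_two hR (by omega) hy hgcd
      (euclidMove_add_mul hc (by omega) hl) hRc

end IsRemoteness

/-- For coprime `x, y` with `x > 1`, `y > 1` and `|x - y| ≥ 2`: the Smith
remoteness of the game Euclid satisfies `R(x,y) = 3` iff `x = my ± 1` or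
`y = mx ± 1` for some integer `m ≥ 2`. -/
theorem euclid_remoteness_three (x y : ℕ) (hx : 1 < x) (hy : 1 < y)
    (hgcd : Nat.gcd x y = 1) (hfar : 2 ≤ ((x : ℤ) - (y : ℤ)).natAbs)
    (R : ℕ × ℕ → ℕ) (hR : IsRemoteness EuclidMove R) :
    R (x, y) = 3 ↔
      ∃ m : ℕ, 2 ≤ m ∧
        (x = m * y + 1 ∨ x + 1 = m * y ∨ y = m * x + 1 ∨ y + 1 = m * x) := by
  wlog hlt : y < x generalizing x y R
  · have hswap := this y x hy hx (Nat.gcd_comm x y ▸ hgcd) (by omega) _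
      (IsRemoteness.euclid_swap hR) (by omega)
    exact hswap.trans (exists_congr fun m => and_congr_right fun _ => by tauto)
  rw [IsRemoteness.euclid_eq_three_iff hR hy (by omega) hgcd]
  refine exists_congr fun m => and_congr_right fun hm => ?_
  have := Nat.mul_le_mul_right x hm
  omega
end

section
/- In the game WYT(a,b) (a, b positive integers), the Smith remoteness function satisfies R(x_m, y_m) = 2m for every m ∈ ℤ_{≥0}, where (x_m, y_m) is the m-th P-position defined by the recursion x_0 = y_0 = 0, x_m = mex_b{x_0, y_0, …, x_{m−1}, y_{m−1}}, y_m = x_m + am. -/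
/-- A move of the game WYT(a,b): reduce `x` by `ε` and `y` by `δ` with
`0 ≤ ε ≤ x`, `0 ≤ δ ≤ y`, `ε + δ > 0`, and `|ε - δ| < a` or `min(ε,δ) < b`. -/
def WytMove (a b : ℕ) (p q : ℕ × ℕ) : Prop :=
  q.1 ≤ p.1 ∧ q.2 ≤ p.2 ∧ q ≠ p ∧
    ((((p.1 - q.1 : ℕ) : ℤ) - ((p.2 - q.2 : ℕ) : ℤ)).natAbs < a ∨
      min (p.1 - q.1) (p.2 - q.2) < b)

/-- The minimum `b`-excludant of a finite set `S = {s₁ < s₂ < … < sₗ}` of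
nonnegative integers: `0` if `S = ∅`, and otherwise `sᵢ + b` where `i` is the
smallest index with `s_{i+1} - sᵢ > b` (with `s_{ℓ+1} = +∞`), i.e. `sᵢ` is the
smallest element of `S` followed by a gap larger than `b`. -/
noncomputable def mexb (b : ℕ) (S : Finset ℕ) : ℕ :=
  if S.Nonempty then sInf {s : ℕ | s ∈ S ∧ ∀ t ∈ S, s < t → s + b < t} + b else 0

/-- The set `{x₀, y₀, …, x_{m-1}, y_{m-1}}` of the first `m` pairs of the
sequence of P-positions of WYT(a,b). -/
noncomputable def wytF (a b : ℕ) : ℕ → Finset ℕ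
  | 0 => ∅
  | m + 1 => wytF a b m ∪ {mexb b (wytF a b m), mexb b (wytF a b m) + a * m}

/-- `x_m = mex_b {x₀, y₀, …, x_{m-1}, y_{m-1}}` (so `x₀ = 0`). -/
noncomputable def wytX (a b m : ℕ) : ℕ := mexb b (wytF a b m)

/-- `y_m = x_m + a·m` (so `y₀ = 0`). -/
noncomputable def wytY (a b m : ℕ) : ℕ := wytX a b m + a * m

/-- The P-positions of WYT(a,b): the pairs `(x_m, y_m)` and `(y_m, x_m)`. -/
def WytP (a b : ℕ) (p : ℕ × ℕ) : Prop :=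
  ∃ m : ℕ, p = (wytX a b m, wytY a b m) ∨ p = (wytY a b m, wytX a b m)

/-! The pairs `(x_m, y_m)`, `(y_m, x_m)` form the kernel of the move graph: no move joins two of
them and every other position moves into one. Hence the positions of even remoteness are exactly
these P-positions, and `R` is symmetric because the moves are. Induct on `m`. Every move from
`(x_m, y_m)` reaches an N-position, which moves on to a P-position of index `< m`; so
`R(x_m, y_m) ≤ 2m`. Conversely, `(x_m, y_m - 1)` can reach `(x_{m-1}, y_{m-1})` but no P-position
of smaller index, so it has remoteness `2m - 1`, and `R(x_m, y_m) ≥ 2m`. -/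

namespace IsRemoteness

variable {α β : Type*} {mv : α → α → Prop} {R : α → ℕ} {x y : α} {n : ℕ}

theorem le_succ_of_move_even (hR : IsRemoteness mv R) (h : mv x y) (hy : Even (R y)) :
    R x ≤ R y + 1 := by
  obtain ⟨z, -, -, hz, hmin⟩ := (hR x).2.1 ⟨y, h, hy⟩
  exact hz ▸ Nat.add_le_add_right (hmin y h hy) 1

theorem succ_le_of_forall_even_ge (hR : IsRemoteness mv R) (hex : ∃ y, mv x y ∧ Even (R y))
    (hge : ∀ y, mv x y → Even (R y) → n ≤ R y) : n + 1 ≤ R x := by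
  obtain ⟨z, hz, hze, hRz, -⟩ := (hR x).2.1 hex
  exact hRz ▸ Nat.add_le_add_right (hge z hz hze) 1

theorem not_even_of_move_even (hR : IsRemoteness mv R) (h : mv x y) (hy : Even (R y)) :
    ¬ Even (R x) := by
  obtain ⟨z, -, hze, hz, -⟩ := (hR x).2.1 ⟨y, h, hy⟩
  rw [hz, Nat.even_add_one, not_not]
  exact hze

theorem lt_of_forall_not_even (hR : IsRemoteness mv R) (hodd : ∀ y, mv x y → ¬ Even (R y))
    (h : mv x y) : R y < R x := by
  obtain ⟨z, -, hz, hmax⟩ := (hR x).2.2 ⟨y, h⟩ hodd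
  exact hz ▸ Nat.lt_succ_of_le (hmax y h)

theorem le_succ_of_forall_not_even (hR : IsRemoteness mv R) (hex : ∃ y, mv x y)
    (hodd : ∀ y, mv x y → ¬ Even (R y)) (hle : ∀ y, mv x y → R y ≤ n) : R x ≤ n + 1 := by
  obtain ⟨z, hz, hRz, -⟩ := (hR x).2.2 hex hodd
  exact hRz ▸ Nat.add_le_add_right (hle z hz) 1

theorem even_of_forall_not_even (hR : IsRemoteness mv R) (hodd : ∀ y, mv x y → ¬ Even (R y)) :
    Even (R x) := by
  by_cases hex : ∃ y, mv x y
  · obtain ⟨z, hz, hRz, -⟩ := (hR x).2.2 hex hodd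
    rw [hRz, Nat.even_add_one]
    exact hodd z hz
  · push Not at hex
    rw [(hR x).1 hex]
    exact Even.zero

theorem even_iff (hR : IsRemoteness mv R) (hwf : WellFounded (flip mv)) {P : α → Prop}
    (hPP : ∀ x y, P x → mv x y → ¬ P y) (hN : ∀ x, ¬ P x → ∃ y, mv x y ∧ P y) (x : α) :
    Even (R x) ↔ P x := by
  induction x using hwf.induction with
  | _ x ih =>
  by_cases hx : P x
  · exact iff_of_true (hR.even_of_forall_not_even fun y h => by
      rw [ih y h]; exact hPP x y hx h) hx
  · obtain ⟨y, h, hy⟩ := hN x hx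
    exact iff_of_false (hR.not_even_of_move_even h ((ih y h).2 hy)) hx

private theorem le_of_forall_move_eq {R' : α → ℕ} (hR : IsRemoteness mv R)
    (hR' : IsRemoteness mv R') (heq : ∀ y, mv x y → R y = R' y) : R x ≤ R' x := by
  by_cases hex : ∃ y, mv x y ∧ Even (R' y)
  · obtain ⟨y, h, hy, hRy, -⟩ := (hR' x).2.1 hex
    rw [hRy, ← heq y h]
    exact hR.le_succ_of_move_even h (heq y h ▸ hy)
  · push Not at hex
    by_cases hmv : ∃ y, mv x y
    · obtain ⟨y, h, hRy, -⟩ := (hR x).2.2 hmv fun y h => heq y h ▸ hex y h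
      rw [hRy, heq y h]
      exact hR'.lt_of_forall_not_even hex h
    · push Not at hmv
      rw [(hR x).1 hmv]
      exact Nat.zero_le _

theorem unique {R' : α → ℕ} (hR : IsRemoteness mv R) (hR' : IsRemoteness mv R')
    (hwf : WellFounded (flip mv)) : R = R' := by
  funext x
  induction x using hwf.induction with
  | _ x ih =>
  exact le_antisymm (le_of_forall_move_eq hR hR' ih)
    (le_of_forall_move_eq hR' hR fun y h => (ih y h).symm)

theorem comp_equiv {mv' : β → β → Prop} {R : β → ℕ} (hR : IsRemoteness mv' R) (e : α ≃ β)
    (he : ∀ x y, mv' (e x) (e y) ↔ mv x y) : IsRemoteness mv (R ∘ e) := by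
  intro x
  refine ⟨fun hx => (hR (e x)).1 fun z hz => ?_, fun ⟨y, h, hy⟩ => ?_, fun ⟨y, h⟩ hodd => ?_⟩
  · obtain ⟨z, rfl⟩ := e.surjective z
    exact hx z ((he x z).1 hz)
  · obtain ⟨z, hz, hze, hRz, hmin⟩ := (hR (e x)).2.1 ⟨e y, (he x y).2 h, hy⟩
    obtain ⟨z, rfl⟩ := e.surjective z
    exact ⟨z, (he x z).1 hz, hze, hRz, fun w hw => hmin (e w) ((he x w).2 hw)⟩
  · obtain ⟨z, hz, hRz, hmax⟩ :=
      (hR (e x)).2.2 ⟨e y, (he x y).2 h⟩ fun w hw => by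
        obtain ⟨w, rfl⟩ := e.surjective w
        exact hodd w ((he x w).1 hw)
    obtain ⟨z, rfl⟩ := e.surjective z
    exact ⟨z, (he x z).1 hz, hRz, fun w hw => hmax (e w) ((he x w).2 hw)⟩

end IsRemoteness

section Mexb

variable {b t : ℕ} {S : Finset ℕ}

theorem exists_mexb_eq_add (h : S.Nonempty) :
    ∃ s ∈ S, (∀ t ∈ S, s < t → s + b < t) ∧ mexb b S = s + b ∧
      ∀ t ∈ S, (∀ u ∈ S, t < u → t + b < u) → s ≤ t := by
  have hne : {s : ℕ | s ∈ S ∧ ∀ t ∈ S, s < t → s + b < t}.Nonempty :=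
    ⟨S.max' h, S.max'_mem h, fun t ht hlt => absurd (S.le_max' t ht) (not_le.2 hlt)⟩
  obtain ⟨hmem, hgap⟩ := Nat.sInf_mem hne
  exact ⟨_, hmem, hgap, if_pos h, fun t ht htgap => Nat.sInf_le ⟨ht, htgap⟩⟩

theorem mexb_not_mem (hb : 0 < b) (S : Finset ℕ) : mexb b S ∉ S := by
  intro hmem
  obtain ⟨s, -, hgap, hs, -⟩ := exists_mexb_eq_add (b := b) ⟨_, hmem⟩
  rw [hs] at hmem
  exact (hgap _ hmem (by omega)).ne rfl

theorem add_le_mexb (ht : t ∈ S) (hlt : t < mexb b S) : t + b ≤ mexb b S := by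
  obtain ⟨s, -, hgap, hs, -⟩ := exists_mexb_eq_add (b := b) ⟨t, ht⟩
  rw [hs] at hlt ⊢
  rcases lt_or_ge s t with hst | hts
  · exact absurd (hgap t ht hst) (by omega)
  · omega

theorem mexb_le_add (ht : t ∈ S) (hgap : ∀ u ∈ S, t < u → t + b < u) : mexb b S ≤ t + b := by
  obtain ⟨s, -, -, hs, hmin⟩ := exists_mexb_eq_add (b := b) ⟨t, ht⟩
  exact hs ▸ Nat.add_le_add_right (hmin t ht hgap) b

theorem exists_mem_le_lt_add (h0 : 0 ∈ S) {n : ℕ} (hn : n < mexb b S) :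
    ∃ t ∈ S, t ≤ n ∧ n < t + b := by
  set T := S.filter (· ≤ n)
  have hT : T.Nonempty := ⟨0, Finset.mem_filter.2 ⟨h0, Nat.zero_le n⟩⟩
  obtain ⟨htS, htn⟩ := Finset.mem_filter.1 (T.max'_mem hT)
  refine ⟨_, htS, htn, Nat.lt_of_not_le fun hle => ?_⟩
  have hgap : ∀ u ∈ S, T.max' hT < u → T.max' hT + b < u := fun u hu hlt => by
    by_cases hun : u ≤ n
    · exact absurd (T.le_max' u (Finset.mem_filter.2 ⟨hu, hun⟩)) (not_le.2 hlt)
    · omega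
  exact absurd (mexb_le_add htS hgap) (by omega)

end Mexb

section Sequence

variable {a b j m : ℕ}

theorem wytF_succ (a b m : ℕ) : wytF a b (m + 1) = wytF a b m ∪ {wytX a b m, wytY a b m} := rfl

theorem mem_wytF {t : ℕ} : t ∈ wytF a b m ↔ ∃ j < m, t = wytX a b j ∨ t = wytY a b j := by
  induction m with
  | zero => simp [wytF]
  | succ m ih =>
    simp only [wytF, Finset.mem_union, Finset.mem_insert, Finset.mem_singleton, ih,
      Nat.lt_succ_iff_lt_or_eq, or_and_right, exists_or, exists_eq_left]
    rfl

theorem wytX_mem_wytF (h : j < m) : wytX a b j ∈ wytF a b m := mem_wytF.2 ⟨j, h, .inl rfl⟩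

theorem wytY_mem_wytF (h : j < m) : wytY a b j ∈ wytF a b m := mem_wytF.2 ⟨j, h, .inr rfl⟩

@[simp] theorem wytX_zero : wytX a b 0 = 0 := by simp [wytX, wytF, mexb]

@[simp] theorem wytY_zero : wytY a b 0 = 0 := by simp [wytY]

theorem wytX_le_wytY (m : ℕ) : wytX a b m ≤ wytY a b m := Nat.le_add_right _ _

theorem add_le_wytX {t : ℕ} (hb : 0 < b) (ht : t ∈ wytF a b m) (hle : t ≤ wytX a b m) :
    t + b ≤ wytX a b m :=
  add_le_mexb ht (hle.lt_of_ne fun h => mexb_not_mem hb _ (h ▸ ht))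

/-- If `x_{m+1} = s + b` had `s < x_m`, the gap after `s` in `F_{m+1}` would also be a gap
in `F_m`, forcing `x_m ≤ s + b`; but `x_m ∈ F_{m+1}` lies beyond that gap. -/
theorem wytX_add_le_wytX_succ (m : ℕ) : wytX a b m + b ≤ wytX a b (m + 1) := by
  have hxm : wytX a b m ∈ wytF a b (m + 1) := wytX_mem_wytF m.lt_succ_self
  obtain ⟨s, hs, hgap, hx, -⟩ := exists_mexb_eq_add (b := b) ⟨_, hxm⟩
  change wytX a b (m + 1) = s + b at hx
  by_contra! hlt
  have hsx : s < wytX a b m := by omega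
  have hsF : s ∈ wytF a b m := by
    rw [wytF_succ, Finset.mem_union, Finset.mem_insert, Finset.mem_singleton] at hs
    have := wytX_le_wytY (a := a) (b := b) m
    rcases hs with hs | rfl | rfl
    · exact hs
    all_goals omega
  have hle : wytX a b m ≤ s + b :=
    mexb_le_add hsF fun u hu => hgap u (by rw [wytF_succ]; exact Finset.mem_union_left _ hu)
  exact absurd (hgap _ hxm hsx) (by omega)

theorem wytX_strictMono (hb : 0 < b) : StrictMono (wytX a b) :=
  strictMono_nat_of_lt_succ fun m => by have := wytX_add_le_wytX_succ (a := a) (b := b) m; omega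

theorem wytY_strictMono (hb : 0 < b) : StrictMono (wytY a b) := fun _ _ h =>
  Nat.add_lt_add_of_lt_of_le (wytX_strictMono hb h) (Nat.mul_le_mul_left a h.le)

theorem wytX_add_le_wytX (hb : 0 < b) (h : j < m) : wytX a b j + b ≤ wytX a b m :=
  add_le_wytX hb (wytX_mem_wytF h) (wytX_strictMono hb h).le

theorem exists_mem_wytF_le_lt_add (hb : 0 < b) (n : ℕ) :
    ∃ t ∈ wytF a b (n + 1), t ≤ n ∧ n < t + b :=
  exists_mem_le_lt_add (wytX_zero (a := a) (b := b) ▸ wytX_mem_wytF n.succ_pos)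
    (Nat.lt_of_lt_of_le n.lt_succ_self ((wytX_strictMono hb).id_le _))

end Sequence

section Game

variable {a b j m : ℕ} {p q : ℕ × ℕ}

theorem WytMove.lt (h : WytMove a b p q) : q < p := lt_of_le_of_ne ⟨h.1, h.2.1⟩ h.2.2.1

theorem wytMove_wellFounded : WellFounded (flip (WytMove a b)) :=
  Subrelation.wf (fun h => WytMove.lt h) wellFounded_lt

theorem wytMove_swap_iff : WytMove a b p.swap q.swap ↔ WytMove a b p q := by
  simp only [WytMove, Prod.fst_swap, Prod.snd_swap, ne_eq, Prod.swap_inj]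
  constructor <;> rintro ⟨h1, h2, hne, h | h⟩ <;> refine ⟨h2, h1, hne, ?_⟩ <;> omega

theorem WytP.swap (h : WytP a b p) : WytP a b p.swap := by
  obtain ⟨m, rfl | rfl⟩ := h
  exacts [⟨m, .inr rfl⟩, ⟨m, .inl rfl⟩]

theorem wytMove_sub_one {x y : ℕ} (hb : 0 < b) (hy : 0 < y) : WytMove a b (x, y) (x, y - 1) :=
  ⟨le_rfl, Nat.sub_le y 1, by simp; omega, .inr (by simp; omega)⟩

theorem not_wytMove_of_add_le (h1 : q.1 + b ≤ p.1) (h2 : p.1 + q.2 + a ≤ p.2 + q.1) :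
    ¬ WytMove a b p q := by
  rintro ⟨-, -, -, h | h⟩ <;> omega

theorem exists_lt_of_wytP_of_lt (ha : 0 < a) (hb : 0 < b) (hq : WytP a b q)
    (hlt : q < (wytX a b m, wytY a b m)) :
    ∃ j < m, q = (wytX a b j, wytY a b j) ∨ q = (wytY a b j, wytX a b j) := by
  obtain ⟨j, hj⟩ := hq
  refine ⟨j, Nat.lt_of_not_le fun hmj => ?_, hj⟩
  have hx := (wytX_strictMono (a := a) hb).monotone hmj
  have hy := (wytY_strictMono (a := a) hb).monotone hmj
  rcases hj with rfl | rfl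
  · exact hlt.not_ge ⟨hx, hy⟩
  · rcases Nat.eq_zero_or_pos m with rfl | hm
    · simp [Prod.lt_iff] at hlt
    · have : 0 < a * m := Nat.mul_pos ha hm
      have := hlt.le.1
      simp only [wytY] at *
      omega

theorem not_wytMove_wytX_wytY (ha : 0 < a) (hb : 0 < b) (hq : WytP a b q) :
    ¬ WytMove a b (wytX a b m, wytY a b m) q := by
  intro h
  obtain ⟨k, hk, rfl | rfl⟩ := exists_lt_of_wytP_of_lt ha hb hq h.lt
  · refine not_wytMove_of_add_le (wytX_add_le_wytX hb hk) ?_ h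
    have : a * k + a ≤ a * m := by nlinarith
    simp only [wytY]
    omega
  · refine not_wytMove_of_add_le (add_le_wytX hb (wytY_mem_wytF hk) h.1) ?_ h
    have : a ≤ a * m := Nat.le_mul_of_pos_right a (by omega)
    simp only [wytY]
    omega

theorem WytP.not_wytMove (ha : 0 < a) (hb : 0 < b) (hp : WytP a b p) (hq : WytP a b q) :
    ¬ WytMove a b p q := by
  obtain ⟨m, rfl | rfl⟩ := hp
  · exact not_wytMove_wytX_wytY ha hb hq
  · rw [← wytMove_swap_iff]
    exact not_wytMove_wytX_wytY ha hb hq.swap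

/-- With `k = ⌊(y - x)/a⌋`, either `(x_k, y_k)` is reachable keeping `|ε - δ| < a`, or `x < x_k`
and the P-position whose smaller coordinate lies in `(x - b, x]` is reachable with `ε < b`. -/
theorem exists_wytMove_wytP_of_le (ha : 0 < a) (hb : 0 < b) {x y : ℕ} (hxy : x ≤ y)
    (hp : ¬ WytP a b (x, y)) : ∃ q, WytMove a b (x, y) q ∧ WytP a b q := by
  have hne : ∀ j, (wytX a b j, wytY a b j) ≠ (x, y) ∧ (wytY a b j, wytX a b j) ≠ (x, y) :=
    fun j => ⟨fun h => hp ⟨j, .inl h.symm⟩, fun h => hp ⟨j, .inr h.symm⟩⟩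
  set k := (y - x) / a
  have hk : a * k ≤ y - x := Nat.mul_div_le (y - x) a
  by_cases hxk : wytX a b k ≤ x
  · have hk' : y - x < a * k + a := Nat.lt_mul_div_succ (y - x) ha
    refine ⟨_, ⟨hxk, ?_, (hne k).1, .inl ?_⟩, k, .inl rfl⟩ <;> simp only [wytY] <;> omega
  obtain ⟨t, htF, htx, hxt⟩ := exists_mem_wytF_le_lt_add (a := a) hb x
  obtain ⟨j, -, rfl | rfl⟩ := mem_wytF.1 htF
  · have hjk : a * j ≤ a * k :=
      Nat.mul_le_mul_left a ((wytX_strictMono (a := a) hb).lt_iff_lt.1 (by omega)).le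
    refine ⟨_, ⟨htx, ?_, (hne j).1, .inr ?_⟩, j, .inl rfl⟩ <;> simp only [wytY] at * <;> omega
  · have := wytX_le_wytY (a := a) (b := b) j
    exact ⟨_, ⟨htx, by omega, (hne j).2, .inr (by simp; omega)⟩, j, .inr rfl⟩

theorem exists_wytMove_wytP (ha : 0 < a) (hb : 0 < b) (hp : ¬ WytP a b p) :
    ∃ q, WytMove a b p q ∧ WytP a b q := by
  rcases le_total p.1 p.2 with h | h
  · exact exists_wytMove_wytP_of_le ha hb h hp
  · obtain ⟨q, hq, hqP⟩ := exists_wytMove_wytP_of_le ha hb h fun h => hp (by simpa using h.swap)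
    exact ⟨q.swap, wytMove_swap_iff.1 hq, hqP.swap⟩

end Game

section Remoteness

variable {a b n : ℕ} {R : ℕ × ℕ → ℕ}

theorem even_remoteness_iff_wytP (ha : 0 < a) (hb : 0 < b) (hR : IsRemoteness (WytMove a b) R)
    (p : ℕ × ℕ) : Even (R p) ↔ WytP a b p :=
  hR.even_iff wytMove_wellFounded (fun _ _ hp h hq => hp.not_wytMove ha hb hq h)
    (fun _ hp => exists_wytMove_wytP ha hb hp) p

theorem remoteness_swap (hR : IsRemoteness (WytMove a b) R) (p : ℕ × ℕ) : R p.swap = R p :=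
  congrFun ((hR.comp_equiv (Equiv.prodComm ℕ ℕ) fun _ _ => wytMove_swap_iff).unique hR
    wytMove_wellFounded) p

theorem wytMove_pred_wytY_wytX_wytY (ha : 0 < a) (hb : 0 < b) :
    WytMove a b (wytX a b (n + 1), wytY a b (n + 1) - 1) (wytX a b n, wytY a b n) := by
  have := wytX_add_le_wytX_succ (a := a) (b := b) n
  have : a * (n + 1) = a * n + a := Nat.mul_succ a n
  refine ⟨?_, ?_, ?_, .inl ?_⟩ <;> simp only [wytY, ne_eq, Prod.mk.injEq]
  all_goals omega

theorem le_of_wytMove_pred_wytY (ha : 0 < a) (hb : 0 < b) {j : ℕ} {q : ℕ × ℕ}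
    (h : WytMove a b (wytX a b (n + 1), wytY a b (n + 1) - 1) q)
    (hq : q = (wytX a b j, wytY a b j) ∨ q = (wytY a b j, wytX a b j)) : n ≤ j := by
  by_contra! hjn
  have : a * j + a + 1 ≤ a * (n + 1) := by nlinarith
  rcases hq with rfl | rfl
  · refine not_wytMove_of_add_le (wytX_add_le_wytX hb (by omega)) ?_ h
    simp only [wytY] at *
    omega
  · refine not_wytMove_of_add_le (add_le_wytX hb (wytY_mem_wytF (by omega)) h.1) ?_ h
    simp only [wytY] at *
    omega

end Remoteness

/-- The Smith remoteness function of WYT(a,b) satisfies `R(x_m, y_m) = 2m`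
for every `m`. -/
theorem wyt_remoteness_pposition (a b : ℕ) (ha : 0 < a) (hb : 0 < b)
    (R : ℕ × ℕ → ℕ) (hR : IsRemoteness (WytMove a b) R) (m : ℕ) :
    R (wytX a b m, wytY a b m) = 2 * m := by
  have hP := even_remoteness_iff_wytP ha hb hR
  induction m using Nat.strong_induction_on with | _ m ih =>
  have hbelow : ∀ r, WytP a b r → r < (wytX a b m, wytY a b m) → ∃ j < m, R r = 2 * j ∧
      (r = (wytX a b j, wytY a b j) ∨ r = (wytY a b j, wytX a b j)) := fun r hr hlt => by
    obtain ⟨j, hj, hpos⟩ := exists_lt_of_wytP_of_lt ha hb hr hlt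
    refine ⟨j, hj, ?_, hpos⟩
    rcases hpos with rfl | rfl
    exacts [ih j hj, (remoteness_swap hR _).trans (ih j hj)]
  rcases m with _ | n
  · exact (hR _).1 fun q h => by simpa [Prod.lt_iff] using h.lt
  have hodd : ∀ q, WytMove a b (wytX a b (n + 1), wytY a b (n + 1)) q → ¬ Even (R q) :=
    fun q h he => (WytP.not_wytMove ha hb ⟨n + 1, .inl rfl⟩ ((hP q).1 he)) h
  have hy : 0 < wytY a b (n + 1) := Nat.add_pos_right _ (Nat.mul_pos ha n.succ_pos)
  have hq₀ := wytMove_sub_one (a := a) (x := wytX a b (n + 1)) hb hy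
  apply le_antisymm
  · refine hR.le_succ_of_forall_not_even (n := 2 * n + 1) ⟨_, hq₀⟩ hodd fun q hq => ?_
    obtain ⟨r, hqr, hr⟩ := exists_wytMove_wytP ha hb (mt (hP q).2 (hodd q hq))
    obtain ⟨j, hj, hRr, -⟩ := hbelow r hr (hqr.lt.trans hq.lt)
    have := hR.le_succ_of_move_even hqr (hRr ▸ even_two_mul j)
    omega
  · have hlt := hR.lt_of_forall_not_even hodd hq₀
    have hge : 2 * n + 1 ≤ R _ := hR.succ_le_of_forall_even_ge
      ⟨_, wytMove_pred_wytY_wytX_wytY ha hb, (ih n n.lt_succ_self).symm ▸ even_two_mul n⟩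
      fun r hr hre => by
        obtain ⟨j, -, hRr, hpos⟩ := hbelow r ((hP r).1 hre) (hr.lt.trans hq₀.lt)
        have := le_of_wytMove_pred_wytY ha hb hr hpos
        omega
    omega
end

section
/- Let (x,y) be an N-position of WYT(a,b). Then at most four P-positions are reachable from (x,y) by non-diagonal (i.e., horizontal or vertical) moves: at most one P-position of the form (x_m, y_m) and at most one of the form (y_m, x_m) are reachable by vertical moves, and likewise for horizontal moves. -/
lemma wyt_cand_nonempty (b : ℕ) (S : Finset ℕ) (hS : S.Nonempty) :
    {s : ℕ | s ∈ S ∧ ∀ t ∈ S, s < t → s + b < t}.Nonempty :=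
  ⟨S.max' hS, S.max'_mem hS, fun t ht hlt => absurd (S.le_max' t ht) (by omega)⟩

lemma wytX_step (a b m : ℕ) : wytX a b m + b ≤ wytX a b (m + 1) := by
  have hxT : wytX a b m ∈ wytF a b (m + 1) := by
    show _ ∈ wytF a b m ∪ {mexb b (wytF a b m), mexb b (wytF a b m) + a * m}
    simp [wytX]
  have hT : (wytF a b (m + 1)).Nonempty := ⟨_, hxT⟩
  have hC := wyt_cand_nonempty b _ hT
  have hmem := Nat.sInf_mem hC
  have heq : wytX a b (m + 1) =
      sInf {s : ℕ | s ∈ wytF a b (m + 1) ∧ ∀ t ∈ wytF a b (m + 1), s < t → s + b < t} + b := by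
    rw [wytX, mexb, if_pos hT]
  rw [heq]
  set s := sInf {s : ℕ | s ∈ wytF a b (m + 1) ∧ ∀ t ∈ wytF a b (m + 1), s < t → s + b < t} with hs
  obtain ⟨hsmem, hgap⟩ := hmem
  have : wytX a b m ≤ s := by
    by_contra h
    push_neg at h
    have hsS : s ∈ wytF a b m := by
      have : s ∈ wytF a b m ∪ {mexb b (wytF a b m), mexb b (wytF a b m) + a * m} := hsmem
      rw [Finset.mem_union, Finset.mem_insert, Finset.mem_singleton] at this
      rcases this with h' | h' | h'
      · exact h'
      · exact absurd h' (by rw [← wytX] at *; omega)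
      · exact absurd h' (by rw [← wytX] at *; omega)
    have hSne : (wytF a b m).Nonempty := ⟨s, hsS⟩
    have hxeq : wytX a b m =
        sInf {u : ℕ | u ∈ wytF a b m ∧ ∀ t ∈ wytF a b m, u < t → u + b < t} + b := by
      rw [wytX, mexb, if_pos hSne]
    have hle : sInf {u : ℕ | u ∈ wytF a b m ∧ ∀ t ∈ wytF a b m, u < t → u + b < t} ≤ s :=
      Nat.sInf_le ⟨hsS, fun t ht hlt => hgap t (Finset.mem_union_left _ ht) hlt⟩
    have := hgap _ hxT h
    omega
  omega

lemma wytX_mono (a b : ℕ) {m m' : ℕ} (h : m < m') : wytX a b m + b ≤ wytX a b m' := by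
  induction m' with
  | zero => omega
  | succ n ih =>
    rcases Nat.lt_succ_iff_lt_or_eq.mp h with h' | h'
    · have h1 := ih h'
      have h2 := wytX_step a b n
      omega
    · subst h'; exact wytX_step a b m

lemma wytY_mono (a b : ℕ) {m m' : ℕ} (h : m < m') : wytY a b m + b ≤ wytY a b m' := by
  have h1 := wytX_mono a b h
  have h2 : a * m ≤ a * m' := Nat.mul_le_mul_left a h.le
  unfold wytY; omega


/-- From an N-position `(x,y)` of WYT(a,b), at most four P-positions are
reachable by non-diagonal moves: at most one of the form `(x_m, y_m)` and at
most one of the form `(y_m, x_m)` by vertical moves (`δ = y - q.2 ≤ b - 1`),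
and likewise for horizontal moves (`ε = x - q.1 ≤ b - 1`). -/
theorem wyt_nondiagonal_moves (a b : ℕ) (ha : 0 < a) (hb : 0 < b)
    (x y : ℕ) (hN : ¬ WytP a b (x, y)) :
    (∃ s : Finset (ℕ × ℕ), s.card ≤ 4 ∧
      ∀ q : ℕ × ℕ, WytMove a b (x, y) q →
        (a : ℕ) ≤ (((x - q.1 : ℕ) : ℤ) - ((y - q.2 : ℕ) : ℤ)).natAbs →
        WytP a b q → q ∈ s) ∧
    (∀ m m' : ℕ,
      WytMove a b (x, y) (wytX a b m, wytY a b m) → y - wytY a b m < b →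
      WytMove a b (x, y) (wytX a b m', wytY a b m') → y - wytY a b m' < b →
      m = m') ∧
    (∀ m m' : ℕ,
      WytMove a b (x, y) (wytY a b m, wytX a b m) → y - wytX a b m < b →
      WytMove a b (x, y) (wytY a b m', wytX a b m') → y - wytX a b m' < b →
      m = m') ∧
    (∀ m m' : ℕ,
      WytMove a b (x, y) (wytX a b m, wytY a b m) → x - wytX a b m < b →
      WytMove a b (x, y) (wytX a b m', wytY a b m') → x - wytX a b m' < b →
      m = m') ∧
    (∀ m m' : ℕ,
      WytMove a b (x, y) (wytY a b m, wytX a b m) → x - wytY a b m < b →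
      WytMove a b (x, y) (wytY a b m', wytX a b m') → x - wytY a b m' < b →
      m = m') := by
  classical
  have u1 : ∀ m m' : ℕ,
      WytMove a b (x, y) (wytX a b m, wytY a b m) → y - wytY a b m < b →
      WytMove a b (x, y) (wytX a b m', wytY a b m') → y - wytY a b m' < b →
      m = m' := by
    intro m m' h1 hd1 h2 hd2
    have e1 : wytY a b m ≤ y := h1.2.1
    have e2 : wytY a b m' ≤ y := h2.2.1
    rcases Nat.lt_trichotomy m m' with h | h | h
    · have := wytY_mono a b h; omega
    · exact h
    · have := wytY_mono a b h; omega
  have u2 : ∀ m m' : ℕ,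
      WytMove a b (x, y) (wytY a b m, wytX a b m) → y - wytX a b m < b →
      WytMove a b (x, y) (wytY a b m', wytX a b m') → y - wytX a b m' < b →
      m = m' := by
    intro m m' h1 hd1 h2 hd2
    have e1 : wytX a b m ≤ y := h1.2.1
    have e2 : wytX a b m' ≤ y := h2.2.1
    rcases Nat.lt_trichotomy m m' with h | h | h
    · have := wytX_mono a b h; omega
    · exact h
    · have := wytX_mono a b h; omega
  have u3 : ∀ m m' : ℕ,
      WytMove a b (x, y) (wytX a b m, wytY a b m) → x - wytX a b m < b →
      WytMove a b (x, y) (wytX a b m', wytY a b m') → x - wytX a b m' < b →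
      m = m' := by
    intro m m' h1 hd1 h2 hd2
    have e1 : wytX a b m ≤ x := h1.1
    have e2 : wytX a b m' ≤ x := h2.1
    rcases Nat.lt_trichotomy m m' with h | h | h
    · have := wytX_mono a b h; omega
    · exact h
    · have := wytX_mono a b h; omega
  have u4 : ∀ m m' : ℕ,
      WytMove a b (x, y) (wytY a b m, wytX a b m) → x - wytY a b m < b →
      WytMove a b (x, y) (wytY a b m', wytX a b m') → x - wytY a b m' < b →
      m = m' := by
    intro m m' h1 hd1 h2 hd2
    have e1 : wytY a b m ≤ x := h1.1
    have e2 : wytY a b m' ≤ x := h2.1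
    rcases Nat.lt_trichotomy m m' with h | h | h
    · have := wytY_mono a b h; omega
    · exact h
    · have := wytY_mono a b h; omega
  refine ⟨?_, u1, u2, u3, u4⟩
  set Q1 : ℕ → Prop := fun m =>
    WytMove a b (x, y) (wytX a b m, wytY a b m) ∧ y - wytY a b m < b with hQ1
  set Q2 : ℕ → Prop := fun m =>
    WytMove a b (x, y) (wytY a b m, wytX a b m) ∧ y - wytX a b m < b with hQ2
  set Q3 : ℕ → Prop := fun m =>
    WytMove a b (x, y) (wytX a b m, wytY a b m) ∧ x - wytX a b m < b with hQ3
  set Q4 : ℕ → Prop := fun m =>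
    WytMove a b (x, y) (wytY a b m, wytX a b m) ∧ x - wytY a b m < b with hQ4
  set s1 : Finset (ℕ × ℕ) :=
    if h : ∃ m, Q1 m then {(wytX a b h.choose, wytY a b h.choose)} else ∅ with hs1
  set s2 : Finset (ℕ × ℕ) :=
    if h : ∃ m, Q2 m then {(wytY a b h.choose, wytX a b h.choose)} else ∅ with hs2
  set s3 : Finset (ℕ × ℕ) :=
    if h : ∃ m, Q3 m then {(wytX a b h.choose, wytY a b h.choose)} else ∅ with hs3
  set s4 : Finset (ℕ × ℕ) :=
    if h : ∃ m, Q4 m then {(wytY a b h.choose, wytX a b h.choose)} else ∅ with hs4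
  refine ⟨s1 ∪ s2 ∪ s3 ∪ s4, ?_, ?_⟩
  · have c1 : s1.card ≤ 1 := by rw [hs1]; split <;> simp
    have c2 : s2.card ≤ 1 := by rw [hs2]; split <;> simp
    have c3 : s3.card ≤ 1 := by rw [hs3]; split <;> simp
    have c4 : s4.card ≤ 1 := by rw [hs4]; split <;> simp
    have := Finset.card_union_le (s1 ∪ s2 ∪ s3) s4
    have := Finset.card_union_le (s1 ∪ s2) s3
    have := Finset.card_union_le s1 s2
    omega
  · intro q hmove hnd hP
    obtain ⟨m, hq | hq⟩ := hP
    · subst hq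
      have hmin : min (x - wytX a b m) (y - wytY a b m) < b := by
        rcases hmove.2.2.2 with h | h
        · exact absurd hnd (by omega)
        · exact h
      rcases min_lt_iff.mp hmin with h | h
      · -- Q3 m
        have hex : ∃ m, Q3 m := ⟨m, hmove, h⟩
        have : (wytX a b m, wytY a b m) ∈ s3 := by
          rw [hs3, dif_pos hex]
          have := hex.choose_spec
          have heq : m = hex.choose := u3 m hex.choose hmove h this.1 this.2
          rw [heq]; exact Finset.mem_singleton_self _
        exact Finset.mem_union_left _ (Finset.mem_union_right _ this)
      · -- Q1 m
        have hex : ∃ m, Q1 m := ⟨m, hmove, h⟩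
        have : (wytX a b m, wytY a b m) ∈ s1 := by
          rw [hs1, dif_pos hex]
          have := hex.choose_spec
          have heq : m = hex.choose := u1 m hex.choose hmove h this.1 this.2
          rw [heq]; exact Finset.mem_singleton_self _
        exact Finset.mem_union_left _ (Finset.mem_union_left _ (Finset.mem_union_left _ this))
    · subst hq
      have hmin : min (x - wytY a b m) (y - wytX a b m) < b := by
        rcases hmove.2.2.2 with h | h
        · exact absurd hnd (by omega)
        · exact h
      rcases min_lt_iff.mp hmin with h | h
      · -- Q4 m
        have hex : ∃ m, Q4 m := ⟨m, hmove, h⟩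
        have : (wytY a b m, wytX a b m) ∈ s4 := by
          rw [hs4, dif_pos hex]
          have := hex.choose_spec
          have heq : m = hex.choose := u4 m hex.choose hmove h this.1 this.2
          rw [heq]; exact Finset.mem_singleton_self _
        exact Finset.mem_union_right _ this
      · -- Q2 m
        have hex : ∃ m, Q2 m := ⟨m, hmove, h⟩
        have : (wytY a b m, wytX a b m) ∈ s2 := by
          rw [hs2, dif_pos hex]
          have := hex.choose_spec
          have heq : m = hex.choose := u2 m hex.choose hmove h this.1 this.2
          rw [heq]; exact Finset.mem_singleton_self _
        exact Finset.mem_union_left _ (Finset.mem_union_left _ (Finset.mem_union_right _ this))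
end
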